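/- arXiv:1405.0693 — 8 statements merged into one kernel-verified Lean document; each statement's English description precedes it below -/
import Mathlib

section
/- Let G be a non-locally compact Polish group and H a closed normal subgroup of G. If H is locally compact, then the quotient group G/H is not locally compact. -/
/-!
An extension of locally compact groups is locally compact. With `π : G → G ⧸ H`, choose a compact
`K ⊆ H` and a neighbourhood `U` of `1` with `U ∩ H ⊆ K`, a small closed neighbourhood `V` of `1`,
and a compact neighbourhood `C ⊆ π(V)` of the trivial coset. An ultrafilter on `V ∩ π⁻¹(C)`
projects to a limit `π(v)` with `v ∈ V`; lifting through the open map `π` shows that it eventually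
lies in `W * (v • K)` for every neighbourhood `W` of `1`, so it converges to a point of the
compact set `v • K`. Thus `V ∩ π⁻¹(C)` is a compact neighbourhood of `1` in `G`.
-/

open Set Filter Topology Pointwise

theorem IsCompact.exists_le_nhds_of_ultrafilter_le_nhdsSet {X : Type*} [TopologicalSpace X]
    {K : Set X} (hK : IsCompact K) {F : Ultrafilter X} (hF : ↑F ≤ 𝓝ˢ K) :
    ∃ x ∈ K, ↑F ≤ 𝓝 x := by
  by_contra! h
  have hdisj : Disjoint (𝓝ˢ K) F :=
    hK.disjoint_nhdsSet_left.2 fun x hx ↦ (F.disjoint_iff_not_le.2 (h x hx)).symm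
  exact F.neBot.ne (hdisj.eq_bot_of_ge hF)

section TopologicalGroup

variable {G : Type*} [Group G] [TopologicalSpace G] [IsTopologicalGroup G]

theorem le_nhdsSet_of_forall_mul_mem {K : Set G} (hK : IsCompact K) {l : Filter G}
    (hl : ∀ W ∈ 𝓝 (1 : G), W * K ∈ l) : l ≤ 𝓝ˢ K := by
  refine (hasBasis_nhdsSet K).ge_iff.2 fun O ⟨hO, hKO⟩ ↦ ?_
  obtain ⟨W, hW, hWKO⟩ := compact_open_separated_mul_left hK hO hKO
  exact mem_of_superset (hl W hW) hWKO

theorem exists_isClosed_nhds_one_forall_inv_mul_inv_mul_mem {U : Set G} (hU : U ∈ 𝓝 (1 : G)) :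
    ∃ V ∈ 𝓝 (1 : G), IsClosed V ∧ ∀ a ∈ V, ∀ b ∈ V, ∀ c ∈ V, a⁻¹ * b⁻¹ * c ∈ U := by
  obtain ⟨V₀, hV₀, hV₀U⟩ := exists_nhds_one_split4 hU
  obtain ⟨V, hV, hVclosed, hVV₀⟩ :=
    exists_mem_nhds_isClosed_subset (inter_mem hV₀ (inv_mem_nhds_one G hV₀))
  refine ⟨V, hV, hVclosed, fun a ha b hb c hc ↦ ?_⟩
  simpa using hV₀U (hVV₀ ha).2 (hVV₀ hb).2 (hVV₀ hc).1 (mem_of_mem_nhds hV₀)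

theorem exists_isCompact_subset_nhds_inter_subset {X : Type*} [TopologicalSpace X] {s : Set X}
    [WeaklyLocallyCompactSpace s] {x : X} (hx : x ∈ s) :
    ∃ K ⊆ s, IsCompact K ∧ ∃ U ∈ 𝓝 x, U ∩ s ⊆ K := by
  obtain ⟨K, hK, hKx⟩ := exists_compact_mem_nhds (⟨x, hx⟩ : s)
  obtain ⟨U, hU, hUK⟩ := (mem_nhds_subtype s _ K).1 hKx
  refine ⟨(↑) '' K, by simp, hK.image continuous_subtype_val, U, hU, fun y ⟨hyU, hys⟩ ↦ ?_⟩
  exact ⟨⟨y, hys⟩, hUK hyU, rfl⟩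

theorem isCompact_inter_preimage_mk {H : Subgroup G} {K U V : Set G} {C : Set (G ⧸ H)}
    (hK : IsCompact K) (hKH : K ⊆ H) (hUK : U ∩ H ⊆ K) (hV1 : V ∈ 𝓝 (1 : G)) (hV : IsClosed V)
    (hVU : ∀ a ∈ V, ∀ b ∈ V, ∀ c ∈ V, a⁻¹ * b⁻¹ * c ∈ U) (hC : IsCompact C)
    (hCV : C ⊆ (↑) '' V) : IsCompact (V ∩ (↑) ⁻¹' C) := by
  rw [isCompact_iff_ultrafilter_le_nhds']
  intro F hF
  have hFV : V ∈ F := mem_of_superset hF inter_subset_left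
  obtain ⟨_, hcC, hFc⟩ := hC.ultrafilter_le_nhds' (F.map (↑))
    (Ultrafilter.mem_map.2 (mem_of_superset hF inter_subset_right))
  obtain ⟨v, hvV, rfl⟩ := hCV hcC
  have hvK : ∀ W ∈ 𝓝 (1 : G), W * (v • K) ∈ F := by
    intro W hW
    have hS : (· * v⁻¹) ⁻¹' (W ∩ V) ∈ 𝓝 v :=
      (continuous_mul_const v⁻¹).continuousAt.preimage_mem_nhds (by simpa using inter_mem hW hV1)
    filter_upwards [hFc (QuotientGroup.isOpenMap_coe.image_mem_nhds hS), hFV]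
      with x ⟨s, ⟨hsW, hsV⟩, hsx⟩ hxV
    have hsxK : s⁻¹ * x ∈ K := by
      refine hUK ⟨?_, QuotientGroup.eq.1 hsx⟩
      simpa [mul_assoc] using hVU v hvV _ hsV x hxV
    exact ⟨s * v⁻¹, hsW, v * (s⁻¹ * x), smul_mem_smul_set hsxK, by group⟩
  obtain ⟨_, ⟨k, hk, rfl⟩, hFy⟩ := (hK.smul v).exists_le_nhds_of_ultrafilter_le_nhdsSet
    (le_nhdsSet_of_forall_mul_mem (hK.smul v) hvK)
  refine ⟨v • k, ⟨hV.mem_of_tendsto (tendsto_id'.2 hFy) hFV, ?_⟩, hFy⟩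
  rwa [mem_preimage, smul_eq_mul, QuotientGroup.mk_mul_of_mem v (hKH hk)]

theorem locallyCompactSpace_of_subgroup_of_quotient (H : Subgroup G)
    [WeaklyLocallyCompactSpace H] [LocallyCompactSpace (G ⧸ H)] : LocallyCompactSpace G := by
  obtain ⟨K, hKH, hK, U, hU, hUK⟩ := exists_isCompact_subset_nhds_inter_subset H.one_mem
  obtain ⟨V, hV1, hV, hVU⟩ := exists_isClosed_nhds_one_forall_inv_mul_inv_mul_mem hU
  obtain ⟨C, hC1, hCV, hC⟩ := local_compact_nhds
    (QuotientGroup.isOpenMap_coe (N := H) |>.image_mem_nhds hV1)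
  refine (isCompact_inter_preimage_mk hK hKH hUK hV1 hV hVU hC hCV)
    |>.locallyCompactSpace_of_mem_nhds_of_group (x := 1)
    (inter_mem hV1 (QuotientGroup.continuous_mk.continuousAt.preimage_mem_nhds hC1))

end TopologicalGroup

theorem stmt0_general {G : Type*} [Group G] [TopologicalSpace G] [IsTopologicalGroup G]
    (hG : ¬ LocallyCompactSpace G) (H : Subgroup G) (hHlc : LocallyCompactSpace H) :
    ¬ LocallyCompactSpace (G ⧸ H) :=
  fun _ ↦ hG (locallyCompactSpace_of_subgroup_of_quotient H)

/-- If `G` is a non-locally compact Polish group and `H` a closed normal subgroup of `G`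
which is locally compact, then `G/H` is not locally compact. -/
theorem stmt0 {G : Type*} [Group G] [TopologicalSpace G] [IsTopologicalGroup G] [PolishSpace G]
    (hG : ¬ LocallyCompactSpace G) (H : Subgroup G) [H.Normal]
    (hHclosed : IsClosed (H : Set G)) (hHlc : LocallyCompactSpace H) :
    ¬ LocallyCompactSpace (G ⧸ H) :=
  stmt0_general hG H hHlc
end

section
/- A Polish group G has a countable neighborhood basis at the identity consisting of open normal subgroups if and only if G is non-archimedean and admits a compatible two-sided invariant metric. -/
/-!
If the `B n` are open normal subgroups forming a basis at `1`, then `‖g‖ = 2⁻¹ ^ n` for the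
first `n` with `g ∉ B n` is an ultrametric group norm which is invariant under conjugation
(the `B n` are normal), and its balls at `1` are the finite intersections of the `B n`. Hence
`dist x y = ‖x⁻¹ * y‖` is a compatible two-sided invariant metric.

Conversely, a two-sided invariant metric has conjugation invariant balls at `1`. If such a ball
lies in an open subgroup `V`, it also lies in the normal core of `V`, which is therefore open;
first countability then extracts a sequence of these normal cores forming a basis.
-/

open Topology Filter

namespace Subgroup

variable {G : Type*} [Group G]

open Classical in
/-- `2⁻¹ ^ n` for the least `n` with `g ∉ B n`, and `0` if `g` lies in every `B n`. -/
noncomputable def exitNorm (B : ℕ → Subgroup G) (g : G) : ℝ :=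
  if h : ∃ n, g ∉ B n then 2⁻¹ ^ Nat.find h else 0

variable {B : ℕ → Subgroup G}

theorem exitNorm_nonneg (g : G) : 0 ≤ exitNorm B g := by
  unfold exitNorm; split <;> positivity

theorem exitNorm_lt_pow_iff {g : G} {n : ℕ} :
    exitNorm B g < 2⁻¹ ^ n ↔ ∀ k ≤ n, g ∈ B k := by
  classical
  unfold exitNorm
  split
  case isTrue =>
    rw [pow_lt_pow_iff_right_of_lt_one₀ (by norm_num) (by norm_num), Nat.lt_find_iff]
    simp only [not_not]
  case isFalse h =>
    push Not at h
    exact ⟨fun _ k _ => h k, fun _ => by positivity⟩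

theorem pow_le_exitNorm {g : G} {n : ℕ} (h : g ∉ B n) : 2⁻¹ ^ n ≤ exitNorm B g :=
  not_lt.mp fun hlt => h (exitNorm_lt_pow_iff.mp hlt n le_rfl)

theorem exitNorm_congr {g h : G} (hgh : ∀ n, g ∈ B n ↔ h ∈ B n) :
    exitNorm B g = exitNorm B h := by
  classical
  unfold exitNorm
  have hex : (∃ n, g ∉ B n) ↔ ∃ n, h ∉ B n := by simp only [hgh]
  by_cases hg : ∃ n, g ∉ B n
  · rw [dif_pos hg, dif_pos (hex.mp hg), Nat.find_congr' (hgh _).not]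
  · rw [dif_neg hg, dif_neg (mt hex.mpr hg)]

theorem exitNorm_one : exitNorm B (1 : G) = 0 := by
  simp [exitNorm, one_mem]

theorem exitNorm_inv (g : G) : exitNorm B g⁻¹ = exitNorm B g :=
  exitNorm_congr fun _ => inv_mem_iff

theorem exitNorm_mul_comm (hB : ∀ n, (B n).Normal) (g h : G) :
    exitNorm B (g * h) = exitNorm B (h * g) :=
  exitNorm_congr fun n => (hB n).mem_comm_iff

theorem exitNorm_eq_zero_or (g : G) :
    exitNorm B g = 0 ∨ ∃ n, g ∉ B n ∧ exitNorm B g = 2⁻¹ ^ n := by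
  classical
  unfold exitNorm
  split
  case isTrue hex => exact .inr ⟨_, Nat.find_spec hex, rfl⟩
  case isFalse => exact .inl rfl

theorem exitNorm_mul_le_max (g h : G) :
    exitNorm B (g * h) ≤ max (exitNorm B g) (exitNorm B h) := by
  rcases exitNorm_eq_zero_or (g * h) with hzero | ⟨n, hmul, hpow⟩
  · exact hzero ▸ le_max_of_le_left (exitNorm_nonneg g)
  rw [hpow]
  by_cases hg : g ∈ B n
  · have hh : h ∉ B n := fun hh => hmul (mul_mem hg hh)
    exact le_max_of_le_right (pow_le_exitNorm hh)
  · exact le_max_of_le_left (pow_le_exitNorm hg)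

theorem forall_mem_of_exitNorm_eq_zero {g : G} (h : exitNorm B g = 0) (n : ℕ) : g ∈ B n :=
  exitNorm_lt_pow_iff.mp (h ▸ by positivity) n le_rfl

noncomputable def exitGroupNorm (hB : ∀ g : G, (∀ n, g ∈ B n) → g = 1) : GroupNorm G where
  toFun := exitNorm B
  map_one' := exitNorm_one
  mul_le' g h := (exitNorm_mul_le_max g h).trans
    (max_le_add_of_nonneg (exitNorm_nonneg g) (exitNorm_nonneg h))
  inv' := exitNorm_inv
  eq_one_of_map_eq_zero' _ h := hB _ (forall_mem_of_exitNorm_eq_zero h)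

theorem nhds_one_hasBasis_exitNorm [TopologicalSpace G] (hopen : ∀ n, IsOpen (B n : Set G))
    (hbasis : ∀ U ∈ 𝓝 (1 : G), ∃ n, (B n : Set G) ⊆ U) :
    (𝓝 (1 : G)).HasBasis (fun _ => True) fun n : ℕ => {g | exitNorm B g < 2⁻¹ ^ n} := by
  refine ⟨fun U => ⟨fun hU => ?_, fun ⟨n, _, hn⟩ =>
    mem_of_superset (IsOpen.mem_nhds ?_ ?_) hn⟩⟩
  · obtain ⟨n, hn⟩ := hbasis U hU
    exact ⟨n, trivial, fun g hg => hn (exitNorm_lt_pow_iff.mp hg n le_rfl)⟩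
  · simp only [exitNorm_lt_pow_iff, Set.ofPred_forall]
    exact (Set.finite_Iic n).isOpen_biInter fun k _ => hopen k
  · simp [exitNorm_one]

end Subgroup

open Subgroup

theorem exists_biinvariant_metric_of_nhds_basis_normal {G : Type*} [Group G]
    [tG : TopologicalSpace G] [IsTopologicalGroup G] [T1Space G] (B : ℕ → Subgroup G)
    (hopen : ∀ n, IsOpen (B n : Set G)) (hnormal : ∀ n, (B n).Normal)
    (hbasis : ∀ U ∈ 𝓝 (1 : G), ∃ n, (B n : Set G) ⊆ U) :
    ∃ m : MetricSpace G,
      m.toUniformSpace.toTopologicalSpace = tG ∧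
      (∀ g x y : G, m.toDist.dist (g * x) (g * y) = m.toDist.dist x y) ∧
      (∀ g x y : G, m.toDist.dist (x * g) (y * g) = m.toDist.dist x y) := by
  have hsep (g : G) (hg : ∀ n, g ∈ B n) : g = 1 := by
    by_contra hne
    obtain ⟨n, hn⟩ := hbasis _ (compl_singleton_mem_nhds (Ne.symm hne))
    exact hn (hg n) rfl
  let m : MetricSpace G := (exitGroupNorm hsep).toNormedGroup.toMetricSpace
  have hdist (x y : G) : m.dist x y = exitNorm B (x⁻¹ * y) := rfl
  refine ⟨m, TopologicalSpace.ext_nhds fun x => ?_, fun g x y => ?_, fun g x y => ?_⟩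
  · have hball := @Metric.nhds_basis_ball_pow G m.toPseudoMetricSpace x 2⁻¹ (by norm_num)
      (by norm_num)
    have htrans := (nhds_one_hasBasis_exitNorm hopen hbasis).map (x * ·)
    rw [map_mul_left_nhds_one] at htrans
    refine hball.eq_of_same_basis (htrans.congr (fun _ => Iff.rfl) fun n _ => ?_)
    ext y
    rw [Set.image_mul_left, @Metric.mem_ball' G m.toPseudoMetricSpace, hdist]
    exact Iff.rfl
  · rw [hdist, hdist, show (g * x)⁻¹ * (g * y) = x⁻¹ * y by group]
  · rw [hdist, hdist, show (x * g)⁻¹ * (y * g) = g⁻¹ * (x⁻¹ * y * g) by group,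
      exitNorm_mul_comm hnormal, mul_inv_cancel_right]

theorem exists_nhds_one_conj_subset_of_biinvariant {G : Type*} [Group G] [PseudoMetricSpace G]
    (hl : ∀ g x y : G, dist (g * x) (g * y) = dist x y)
    (hr : ∀ g x y : G, dist (x * g) (y * g) = dist x y) {U : Set G} (hU : U ∈ 𝓝 (1 : G)) :
    ∃ V ∈ 𝓝 (1 : G), ∀ g, ∀ x ∈ V, g * x * g⁻¹ ∈ U := by
  obtain ⟨ε, hε, hball⟩ := Metric.mem_nhds_iff.mp hU
  refine ⟨Metric.ball 1 ε, Metric.ball_mem_nhds 1 hε, fun g x hx => hball ?_⟩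
  rw [Metric.mem_ball] at hx ⊢
  calc dist (g * x * g⁻¹) 1 = dist (g * x) (g * 1) := by
        rw [← hr g, inv_mul_cancel_right, one_mul, mul_one]
    _ = dist x 1 := hl g x 1
    _ < ε := hx

theorem NonarchimedeanGroup.nhds_one_hasBasis_normal {G : Type*} [Group G] [TopologicalSpace G]
    [NonarchimedeanGroup G]
    (hconj : ∀ U ∈ 𝓝 (1 : G), ∃ V ∈ 𝓝 (1 : G), ∀ g, ∀ x ∈ V, g * x * g⁻¹ ∈ U) :
    (𝓝 (1 : G)).HasBasis (fun H : Subgroup G => IsOpen (H : Set G) ∧ H.Normal) (↑) := by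
  refine ⟨fun U => ⟨fun hU => ?_, fun ⟨H, ⟨hopen, _⟩, hHU⟩ =>
    mem_of_superset (hopen.mem_nhds H.one_mem) hHU⟩⟩
  obtain ⟨V, hVU⟩ := NonarchimedeanGroup.is_nonarchimedean U hU
  obtain ⟨W, hW, hWV⟩ := hconj V (V.mem_nhds_one)
  have hWcore : W ⊆ (V : Subgroup G).normalCore := fun x hx g => hWV g x hx
  exact ⟨_, ⟨Subgroup.isOpen_of_mem_nhds _ (mem_of_superset hW hWcore),
    Subgroup.normalCore_normal _⟩, fun x hx => hVU (Subgroup.normalCore_le _ hx)⟩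

/-- A Polish group `G` has a countable neighborhood basis at the identity consisting of
open normal subgroups iff `G` is non-archimedean and admits a compatible two-sided
invariant metric. -/
theorem stmt1 {G : Type*} [Group G] [tG : TopologicalSpace G] [IsTopologicalGroup G]
    [PolishSpace G] :
    (∃ B : ℕ → Subgroup G,
        (∀ n, IsOpen (B n : Set G)) ∧ (∀ n, (B n).Normal) ∧
        ∀ U ∈ 𝓝 (1 : G), ∃ n, (B n : Set G) ⊆ U) ↔
      (NonarchimedeanGroup G ∧
        ∃ m : MetricSpace G,
          m.toUniformSpace.toTopologicalSpace = tG ∧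
          (∀ g x y : G, m.toDist.dist (g * x) (g * y) = m.toDist.dist x y) ∧
          (∀ g x y : G, m.toDist.dist (x * g) (y * g) = m.toDist.dist x y)) := by
  constructor
  · rintro ⟨B, hopen, hnormal, hbasis⟩
    have : NonarchimedeanGroup G :=
      ⟨fun U hU => let ⟨n, hn⟩ := hbasis U hU; ⟨⟨B n, hopen n⟩, hn⟩⟩
    exact ⟨this, exists_biinvariant_metric_of_nhds_basis_normal B hopen hnormal hbasis⟩
  · rintro ⟨_, m, rfl, hl, hr⟩
    obtain ⟨B, hB, hbasis⟩ := (NonarchimedeanGroup.nhds_one_hasBasis_normal fun _ hU =>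
      @exists_nhds_one_conj_subset_of_biinvariant G _ m.toPseudoMetricSpace hl hr _ hU)
      |>.exists_antitone_subbasis
    exact ⟨B, fun n => (hB n).1, fun n => (hB n).2, fun U hU => hbasis.mem_iff.mp hU⟩
end

section
/- Let G be a non-archimedean Polish group and g ∈ G. If the closed subgroup topologically generated by g is not discrete, then it is a profinite group topologically generated by a single element (i.e., it is pro-cyclic). -/
/-!
Let `H` be the closure of `⟨g⟩`. It is abelian and Polish, and `⟨g⟩` is dense in it. If some open
subgroup `U` of `H` contained no nonzero power of `g`, density would force `U = {1}`, making `H`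
discrete. So every open subgroup contains some `g ^ n` with `n ≠ 0`, and then has finite index,
since `⟨g⟩` meets every coset. Hence `H` embeds, as a topological group, into the compact group
`∏ n, H ⧸ W n` for a countable basis `(W n)` of open subgroups. A Polish subgroup of a Polish group
is closed: it is a dense Gδ subgroup of its closure, and any translate of it meets it by Baire's
theorem. So the image is compact, and so is `H`; it is totally disconnected as a subspace of the
non-archimedean group `G`, and it is topologically generated by `g`.
-/

open Topology Filter Set TopologicalSpace

theorem isGδ_range_of_isEmbedding {X Y : Type*} [TopologicalSpace X] [FirstCountableTopology X]
    [T2Space X] [TopologicalSpace Y] [IsCompletelyMetrizableSpace Y] {f : Y → X}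
    (hf : IsEmbedding f) (hd : DenseRange f) : IsGδ (range f) := by
  let := upgradeIsCompletelyMetrizable Y
  -- `A n`: points with a neighbourhood whose trace on `Y` has diameter at most `1 / (n + 1)`
  set A : ℕ → Set X := fun n => {x | ∃ U : Set X, IsOpen U ∧ x ∈ U ∧
      ∀ a b, f a ∈ U → f b ∈ U → dist a b ≤ 1 / (n + 1)}
  have hA_open : ∀ n, IsOpen (A n) := fun n => isOpen_iff_forall_mem_open.2
    fun x ⟨U, hU, hxU, hdiam⟩ => ⟨U, fun z hz => ⟨U, hU, hz, hdiam⟩, hU, hxU⟩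
  have hA_range : ∀ n, range f ⊆ A n := by
    rintro n _ ⟨a, rfl⟩
    set r : ℝ := 1 / (n + 1)
    obtain ⟨U, hU, hUball⟩ :=
      hf.isInducing.isOpen_iff.1 (Metric.isOpen_ball (x := a) (ε := r / 2))
    refine ⟨U, hU, by simp [← mem_preimage, hUball, r]; positivity, fun b c hb hc => ?_⟩
    rw [← mem_preimage, hUball, Metric.mem_ball] at hb hc
    linarith [dist_triangle_right b c a]
  suffices ⋂ n, A n ⊆ range f from
    (Subset.antisymm (subset_iInter hA_range) this) ▸ .iInter_of_isOpen hA_open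
  intro x hx
  choose U hU hxU hdiam using mem_iInter.1 hx
  obtain ⟨b, hb_open, hb⟩ := (nhds_basis_opens x).exists_antitone_subbasis
  have hne : ∀ n, ((⋂ i ∈ Finset.range (n + 1), U i) ∩ b n ∩ range f).Nonempty := fun n =>
    hd.inter_open_nonempty _ ((isOpen_biInter_finset fun i _ => hU i).inter (hb_open n).2)
      ⟨x, mem_iInter₂.2 fun i _ => hxU i, (hb_open n).1⟩
  choose y hy a ha using hne
  obtain rfl : (fun n => f (a n)) = y := funext ha
  have hcauchy : CauchySeq a := by
    refine cauchySeq_of_le_tendsto_0 (fun N => 1 / ((N : ℝ) + 1)) (fun m n N hm hn => ?_)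
      tendsto_one_div_add_atTop_nhds_zero_nat
    have hmem : ∀ k, N ≤ k → f (a k) ∈ U N := fun k hk =>
      mem_iInter₂.1 (hy k).1 N (Finset.mem_range.2 (Nat.lt_succ_of_le hk))
    exact hdiam N _ _ (hmem m hm) (hmem n hn)
  obtain ⟨w, hw⟩ := cauchySeq_tendsto_of_complete hcauchy
  exact ⟨w, tendsto_nhds_unique ((hf.continuous.tendsto w).comp hw) (hb.tendsto fun n => (hy n).2)⟩

theorem Subgroup.eq_top_of_dense_of_isGδ {K : Type*} [Group K] [TopologicalSpace K]
    [IsTopologicalGroup K] [BaireSpace K] {S : Subgroup K} (hd : Dense (S : Set K))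
    (hS : IsGδ (S : Set K)) : S = ⊤ := by
  refine (Subgroup.eq_top_iff' S).2 fun y => ?_
  -- the translate `y • S` is again a dense Gδ set, so it meets `S`
  let τ := Homeomorph.mulLeft y⁻¹
  obtain ⟨z, hzS, hyz⟩ := (Dense.inter_of_Gδ hS (hS.preimage τ.continuous) hd
    (hd.preimage τ.isOpenMap)).nonempty
  simpa [τ] using S.mul_mem hzS (S.inv_mem hyz)

theorem MonoidHom.isClosed_range_of_isEmbedding {A B : Type*} [Group A] [TopologicalSpace A]
    [IsCompletelyMetrizableSpace A] [Group B] [TopologicalSpace B] [IsTopologicalGroup B]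
    [IsCompletelyMetrizableSpace B] (f : A →* B) (hf : IsEmbedding f) :
    IsClosed (Set.range f) := by
  set L := f.range.topologicalClosure
  have : IsCompletelyMetrizableSpace L :=
    f.range.isClosed_topologicalClosure.isCompletelyMetrizableSpace
  set f' : A →* L := f.codRestrict L fun a => f.range.le_topologicalClosure ⟨a, rfl⟩
  have hf' : IsEmbedding f' := hf.codRestrict _ _
  have hd : DenseRange f' := by
    rw [DenseRange, Subtype.dense_iff, ← Set.range_comp]
    exact (f.range.topologicalClosure_coe).subset
  have htop : f'.range = ⊤ :=
    Subgroup.eq_top_of_dense_of_isGδ hd (isGδ_range_of_isEmbedding hf' hd)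
  refine closure_subset_iff_isClosed.1 fun y hy => ?_
  obtain ⟨a, ha⟩ := f'.mem_range.1 (htop ▸ Subgroup.mem_top (⟨y, hy⟩ : L))
  exact ⟨a, congrArg Subtype.val ha⟩

namespace NonarchimedeanGroup

variable {G : Type*} [Group G] [TopologicalSpace G] [NonarchimedeanGroup G]

theorem exists_seq_openSubgroup_basis [FirstCountableTopology G] :
    ∃ W : ℕ → OpenSubgroup G, ∀ s ∈ 𝓝 (1 : G), ∃ n, (W n : Set G) ⊆ s := by
  obtain ⟨b, hb⟩ := (𝓝 (1 : G)).exists_antitone_basis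
  choose W hW using fun n => is_nonarchimedean _ (hb.mem n)
  exact ⟨W, fun s hs => (hb.mem_iff.1 hs).imp fun n hn => (hW n).trans hn⟩

instance subgroup (H : Subgroup G) : NonarchimedeanGroup H where
  is_nonarchimedean U hU := by
    obtain ⟨t, ht, htU⟩ := (mem_nhds_subtype _ _ _).1 hU
    obtain ⟨W, hW⟩ := is_nonarchimedean t ht
    exact ⟨W.comap H.subtype continuous_subtype_val, fun x hx => htU (hW hx)⟩

theorem compactSpace_of_finite_quotient [IsCompletelyMetrizableSpace G]
    (hnormal : ∀ U : OpenSubgroup G, (U : Subgroup G).Normal)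
    (hfinite : ∀ U : OpenSubgroup G, Finite (G ⧸ (U : Subgroup G))) : CompactSpace G := by
  obtain ⟨W, hW⟩ := exists_seq_openSubgroup_basis (G := G)
  have := fun n => hnormal (W n)
  have := fun n => hfinite (W n)
  -- `G` embeds into the profinite group `∏ n, G ⧸ W n`, where its image is closed
  let F : G →* ∀ n, G ⧸ (W n : Subgroup G) := MonoidHom.pi fun n => QuotientGroup.mk' _
  have hF : IsEmbedding F := by
    refine IsInducing.isEmbedding ((IsTopologicalGroup.isInducing_iff_nhds_one).2 ?_)
    have hFc : Continuous F := continuous_pi fun n => QuotientGroup.continuous_mk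
    refine le_antisymm (map_one F ▸ hFc.tendsto 1).le_comap fun s hs => ?_
    obtain ⟨n, hn⟩ := hW s hs
    refine ⟨{p | p n = 1}, ?_, fun x hx => hn ?_⟩
    · exact (isOpen_discrete {1}).preimage (continuous_apply n) |>.mem_nhds rfl
    · simpa [F] using hx
  have hclosed := F.isClosed_range_of_isEmbedding hF
  exact ⟨hF.isInducing.isCompact_iff.2 (image_univ ▸ hclosed.isCompact)⟩

end NonarchimedeanGroup

theorem exists_zpow_mem_of_dense_zpowers {A : Type*} [Group A] [TopologicalSpace A]
    [IsTopologicalGroup A] [T1Space A] {a : A} (ha : Dense (Subgroup.zpowers a : Set A))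
    (hnd : ¬ DiscreteTopology A) (U : OpenSubgroup A) : ∃ n : ℤ, n ≠ 0 ∧ a ^ n ∈ U := by
  by_contra! h
  refine hnd (discreteTopology_iff_isOpen_singleton_one.2 ?_)
  have hUa : (U : Set A) ∩ Subgroup.zpowers a ⊆ {1} := by
    rintro _ ⟨hU, k, rfl⟩
    by_cases hk : k = 0
    · simp [hk]
    · exact absurd hU (h k hk)
  have hU1 : (U : Set A) = {1} := Subset.antisymm
    ((ha.open_subset_closure_inter U.isOpen).trans (closure_minimal hUa isClosed_singleton))
    (singleton_subset_iff.2 U.one_mem)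
  exact hU1 ▸ U.isOpen

theorem finite_quotient_of_dense_zpowers {A : Type*} [Group A] [TopologicalSpace A]
    [IsTopologicalGroup A] {a : A} (ha : Dense (Subgroup.zpowers a : Set A))
    (V : OpenSubgroup A) [(V : Subgroup A).Normal] {n : ℤ} (hn : n ≠ 0) (han : a ^ n ∈ V) :
    Finite (A ⧸ (V : Subgroup A)) := by
  have hfin : IsOfFinOrder (a : A ⧸ (V : Subgroup A)) :=
    isOfFinOrder_iff_zpow_eq_one.2
      ⟨n, hn, by rwa [← QuotientGroup.mk_zpow, QuotientGroup.eq_one_iff]⟩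
  -- every coset is open, so it meets the dense subgroup `⟨a⟩`
  have hsurj : ∀ q : A ⧸ (V : Subgroup A), q ∈ Subgroup.zpowers (a : A ⧸ (V : Subgroup A)) := by
    intro q
    obtain ⟨_, hq, k, rfl⟩ := ha.inter_open_nonempty _
      ((isOpen_discrete {q}).preimage QuotientGroup.continuous_mk)
      (QuotientGroup.mk_surjective.nonempty_preimage.2 (singleton_nonempty q))
    exact ⟨k, by simpa using hq⟩
  exact Set.finite_univ_iff.1
    (hfin.powers_eq_zpowers ▸ hfin.finite_powers |>.subset fun q _ => hsurj q)

/-- In a non-archimedean Polish group, if the closed subgroup topologically generated by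
an element `g` is not discrete, then it is pro-cyclic: a profinite (compact, totally
disconnected) group topologically generated by a single element. -/
theorem stmt4 {G : Type*} [Group G] [TopologicalSpace G] [NonarchimedeanGroup G]
    [PolishSpace G] (g : G)
    (hnd : ¬ DiscreteTopology ((Subgroup.zpowers g).topologicalClosure)) :
    IsCompact ((Subgroup.zpowers g).topologicalClosure : Set G) ∧
    TotallyDisconnectedSpace ((Subgroup.zpowers g).topologicalClosure) ∧
    ∃ h : G, h ∈ (Subgroup.zpowers g).topologicalClosure ∧
      (Subgroup.zpowers h).topologicalClosure = (Subgroup.zpowers g).topologicalClosure := by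
  set H := (Subgroup.zpowers g).topologicalClosure
  have hg : g ∈ H := (Subgroup.zpowers g).le_topologicalClosure (Subgroup.mem_zpowers g)
  let a : H := ⟨g, hg⟩
  have hdense : Dense (Subgroup.zpowers a : Set H) := by
    have himage := congrArg SetLike.coe (H.subtype.map_zpowers a)
    rw [Subgroup.coe_map, Subgroup.coe_subtype] at himage
    exact IsInducing.subtypeVal.dense_iff.2 fun x => himage ▸ x.2
  have : IsMulCommutative H := isMulCommutative_iff.2
    (Subgroup.commGroupTopologicalClosure _ fun x y => mul_comm' x y).mul_comm
  have : IsCompletelyMetrizableSpace H :=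
    (Subgroup.zpowers g).isClosed_topologicalClosure.isCompletelyMetrizableSpace
  have hcompact : CompactSpace H := NonarchimedeanGroup.compactSpace_of_finite_quotient
    (fun _ => inferInstance) fun U =>
      let ⟨_, hn, han⟩ := exists_zpow_mem_of_dense_zpowers hdense hnd U
      finite_quotient_of_dense_zpowers hdense U hn han
  exact ⟨isCompact_iff_compactSpace.2 hcompact, inferInstance, g, hg, rfl⟩
end

section
/- Let Gₙ (n ∈ ℕ) be Polish groups, each equipped with a compatible invariant metric dₙ. Then the group c₀(Gₙ,dₙ) = {g ∈ ∏ₙ Gₙ : dₙ(g(n), e) → 0}, endowed with the supremum metric d_s(g,h) = supₙ dₙ(g(n), h(n)), is a Polish group. -/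
open Topology Filter

open Set Metric TopologicalSpace UniformSpace

/-!
Invariance of the `dₙ` makes `d_s` two-sided invariant, and a group with a two-sided invariant
metric is a topological group: multiplication is 2-Lipschitz and inversion is an isometry.

Separability: sequences that are eventually `1` are dense in `c₀`, and those supported in
`[0, N)` form a continuous image of the separable space `∏_{n<N} Gₙ`.

Complete metrizability: rather than using completeness of the `dₙ`, observe that a `d_s`-Cauchy
sequence converging pointwise converges uniformly, hence in `d_s`, to an element of `c₀`. Since
`∏ Gₙ` is completely metrizable, this suffices: the graph of the inclusion `c₀ → ∏ Gₙ` is then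
closed in the product of the completion of `c₀` with `∏ Gₙ`.
-/

theorem TopologicalSpace.IsCompletelyMetrizableSpace.of_continuous_of_cauchySeq_tendsto
    {X Y : Type*} [MetricSpace X] [TopologicalSpace Y] [IsCompletelyMetrizableSpace Y]
    {f : X → Y} (hf : Continuous f)
    (h : ∀ u : ℕ → X, CauchySeq u → ∀ y, Tendsto (f ∘ u) atTop (𝓝 y) →
      ∃ x, Tendsto u atTop (𝓝 x)) :
    IsCompletelyMetrizableSpace X := by
  set g : X → Completion X × Y := fun x => (x, f x)
  have hg : IsEmbedding g :=
    ((Completion.isUniformEmbedding_coe X).isEmbedding.prodMap IsEmbedding.id).comp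
      (isEmbedding_graph hf)
  refine IsClosedEmbedding.IsCompletelyMetrizableSpace (f := g) ⟨hg, ?_⟩
  refine IsSeqClosed.isClosed fun v p hv hp => ?_
  choose u hu using hv
  obtain rfl : g ∘ u = v := funext hu
  have hu : CauchySeq u :=
    (Completion.isUniformInducing_coe X).cauchy_map_iff.1
      ((continuous_fst.tendsto p).comp hp).cauchySeq
  obtain ⟨x, hx⟩ := h u hu p.2 ((continuous_snd.tendsto p).comp hp)
  exact ⟨x, tendsto_nhds_unique ((hg.continuous.tendsto x).comp hx) hp⟩

theorem IsIsometricSMul.isTopologicalGroup {G : Type*} [Group G] [PseudoMetricSpace G]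
    [IsIsometricSMul G G] [IsIsometricSMul Gᵐᵒᵖ G] : IsTopologicalGroup G where
  continuous_mul := (LipschitzWith.uncurry (f := (· * ·))
    (fun b => (isometry_mul_right b).lipschitz) fun a => (isometry_mul_left a).lipschitz).continuous
  continuous_inv := isometry_inv.continuous

section

variable {G : ℕ → Type*} [∀ n, Group (G n)] [∀ n, MetricSpace (G n)]
  [∀ n, IsIsometricSMul (G n) (G n)] [∀ n, IsIsometricSMul (G n)ᵐᵒᵖ (G n)]

variable (G) in
def c0Subgroup : Subgroup (∀ n, G n) where
  carrier := {g | Tendsto (fun n => dist (g n) 1) atTop (𝓝 0)}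
  one_mem' := by simp
  mul_mem' {a b} ha hb := by
    refine squeeze_zero (fun _ => dist_nonneg) (fun n => ?_) (by simpa using ha.add hb)
    calc dist (a n * b n) 1 ≤ dist (a n * b n) (b n) + dist (b n) 1 := dist_triangle ..
      _ = dist (a n) 1 + dist (b n) 1 := by rw [← dist_mul_right (a n) 1 (b n), one_mul]
  inv_mem' {a} ha := by simpa [← dist_inv_inv (a _)] using ha

theorem mem_c0Subgroup {g : ∀ n, G n} :
    g ∈ c0Subgroup G ↔ ∀ ε > 0, ∀ᶠ n in atTop, dist (g n) 1 < ε := by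
  simp [c0Subgroup, Metric.tendsto_nhds]

/- A type synonym rather than the subtype itself, which already carries the coarser product
topology. -/
variable (G) in
def C0 : Type _ := c0Subgroup G

namespace C0

instance : Group (C0 G) := inferInstanceAs (Group (c0Subgroup G))

instance : CoeFun (C0 G) (fun _ => ∀ n, G n) := ⟨fun g => (g : c0Subgroup G).1⟩

theorem tendsto_dist_one (g : C0 G) : Tendsto (fun n => dist (g n) 1) atTop (𝓝 0) :=
  (g : c0Subgroup G).2

@[simp]
theorem mul_apply (g h : C0 G) (n : ℕ) : (g * h) n = g n * h n := rfl

@[ext]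
theorem ext {g h : C0 G} (hgh : ∀ n, g n = h n) : g = h :=
  Subtype.ext (funext hgh)

theorem bddAbove_range_dist (g h : C0 G) : BddAbove (range fun n => dist (g n) (h n)) := by
  obtain ⟨C, hC⟩ := ((tendsto_dist_one g).add (tendsto_dist_one h)).bddAbove_range
  exact ⟨C, forall_mem_range.2 fun n => (dist_triangle_right _ _ 1).trans (hC ⟨n, rfl⟩)⟩

noncomputable instance : MetricSpace (C0 G) where
  dist g h := ⨆ n, dist (g n) (h n)
  dist_self g := by simp
  dist_comm g h := by simp only [dist_comm]
  dist_triangle f g h := ciSup_le fun n => (dist_triangle _ (g n) _).trans <|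
    add_le_add (le_ciSup (bddAbove_range_dist f g) n) (le_ciSup (bddAbove_range_dist g h) n)
  eq_of_dist_eq_zero {g h} hgh := ext fun n => dist_le_zero.1 <|
    hgh ▸ le_ciSup (bddAbove_range_dist g h) n

theorem dist_eq (g h : C0 G) : dist g h = ⨆ n, dist (g n) (h n) := rfl

theorem dist_apply_le (g h : C0 G) (n : ℕ) : dist (g n) (h n) ≤ dist g h :=
  le_ciSup (bddAbove_range_dist g h) n

theorem dist_le {g h : C0 G} {r : ℝ} (hr : ∀ n, dist (g n) (h n) ≤ r) : dist g h ≤ r :=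
  ciSup_le hr

instance : IsIsometricSMul (C0 G) (C0 G) :=
  ⟨fun c => Isometry.of_dist_eq fun g h => by simp [dist_eq, dist_mul_left]⟩

instance : IsIsometricSMul (C0 G)ᵐᵒᵖ (C0 G) :=
  ⟨fun c => Isometry.of_dist_eq fun g h => by
    simp [dist_eq, MulOpposite.smul_eq_mul_unop, dist_mul_right]⟩

instance : IsTopologicalGroup (C0 G) := IsIsometricSMul.isTopologicalGroup

theorem continuous_coeFn : Continuous fun g : C0 G => (g : ∀ n, G n) :=
  continuous_pi fun n => LipschitzWith.continuous (K := 1) <|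
    .of_dist_le_mul fun g h => by simpa using dist_apply_le g h n

def truncate (N : ℕ) (x : ∀ i : Fin N, G i) : C0 G :=
  ⟨fun n => if h : n < N then x ⟨n, h⟩ else 1, by
    refine tendsto_const_nhds.congr' ?_
    filter_upwards [eventually_ge_atTop N] with n hn
    simp [not_lt.2 hn]⟩

theorem lipschitzWith_truncate (N : ℕ) : LipschitzWith 1 (truncate (G := G) N) :=
  .of_dist_le_mul fun x y => by
    refine dist_le fun n => ?_
    by_cases h : n < N
    · simpa [truncate, h] using dist_le_pi_dist x y ⟨n, h⟩
    · simp [truncate, h]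

theorem dense_iUnion_range_truncate : Dense (⋃ N, range (truncate (G := G) N)) := by
  refine Metric.dense_iff.2 fun g ε hε => ?_
  obtain ⟨N, hN⟩ :=
    (mem_c0Subgroup.1 g.tendsto_dist_one (ε / 2) (half_pos hε)).exists_forall_of_atTop
  refine ⟨truncate N fun i => g i, ?_, mem_iUnion.2 ⟨N, mem_range_self _⟩⟩
  refine mem_ball'.2 ((dist_le fun n => ?_).trans_lt (half_lt_self hε))
  by_cases h : n < N
  · simpa [truncate, h] using (half_pos hε).le
  · simpa [truncate, h] using (hN n (not_lt.1 h)).le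

instance [∀ n, SeparableSpace (G n)] : SeparableSpace (C0 G) :=
  dense_iUnion_range_truncate.isSeparable_iff.1 <|
    .iUnion fun N => isSeparable_range (lipschitzWith_truncate N).continuous

theorem exists_tendsto_of_cauchySeq {u : ℕ → C0 G} (hu : CauchySeq u) {y : ∀ n, G n}
    (hy : Tendsto (fun k => (u k : ∀ n, G n)) atTop (𝓝 y)) : ∃ g, Tendsto u atTop (𝓝 g) := by
  have uniform : ∀ ε > 0, ∃ N, ∀ k ≥ N, ∀ n, dist (u k n) (y n) ≤ ε := by
    intro ε hε
    obtain ⟨N, hN⟩ := Metric.cauchySeq_iff.1 hu ε hε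
    refine ⟨N, fun k hk => ?_⟩
    have closed : IsClosed {z : ∀ n, G n | ∀ n, dist (u k n) (z n) ≤ ε} := by
      simp only [ofPred_forall]
      exact isClosed_iInter fun n => isClosed_le (continuous_const.dist (continuous_apply n))
        continuous_const
    exact closed.mem_of_tendsto hy <| (eventually_ge_atTop N).mono fun l hl n =>
      (dist_apply_le _ _ n).trans (hN k hk l hl).le
  have hy₀ : y ∈ c0Subgroup G := mem_c0Subgroup.2 fun ε hε => by
    obtain ⟨N, hN⟩ := uniform (ε / 2) (half_pos hε)
    filter_upwards [mem_c0Subgroup.1 (u N).tendsto_dist_one (ε / 2) (half_pos hε)] with n hn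
    calc dist (y n) 1 ≤ dist (u N n) (y n) + dist (u N n) 1 := dist_triangle_left ..
      _ < ε := by linarith [hN N le_rfl n]
  refine ⟨⟨y, hy₀⟩, Metric.tendsto_atTop.2 fun ε hε => ?_⟩
  obtain ⟨N, hN⟩ := uniform (ε / 2) (half_pos hε)
  exact ⟨N, fun k hk => (dist_le (hN k hk)).trans_lt (half_lt_self hε)⟩

instance [∀ n, IsCompletelyMetrizableSpace (G n)] : IsCompletelyMetrizableSpace (C0 G) :=
  .of_continuous_of_cauchySeq_tendsto continuous_coeFn fun _ hu _ hy =>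
    exists_tendsto_of_cauchySeq hu hy

end C0

end

theorem stmt5_general (G' : ℕ → Type*) [∀ n, Group (G' n)] [∀ n, MetricSpace (G' n)]
    [∀ n, PolishSpace (G' n)]
    (hinv : ∀ (n : ℕ) (g x y : G' n),
      dist (g * x) (g * y) = dist x y ∧ dist (x * g) (y * g) = dist x y) :
    ∃ S : Subgroup (∀ n, G' n),
      (S : Set (∀ n, G' n)) =
        {g : ∀ n, G' n | Tendsto (fun n => dist (g n) (1 : G' n)) atTop (𝓝 0)} ∧
      ∃ m : MetricSpace S,
        (∀ g h : S,
          m.toDist.dist g h = ⨆ n, dist ((g : ∀ k, G' k) n) ((h : ∀ k, G' k) n)) ∧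
        @PolishSpace S m.toUniformSpace.toTopologicalSpace ∧
        @IsTopologicalGroup S m.toUniformSpace.toTopologicalSpace _ := by
  have (n : ℕ) : IsIsometricSMul (G' n) (G' n) :=
    ⟨fun g => .of_dist_eq fun x y => (hinv n g x y).1⟩
  have (n : ℕ) : IsIsometricSMul (G' n)ᵐᵒᵖ (G' n) :=
    ⟨fun g => .of_dist_eq fun x y => (hinv n g.unop x y).2⟩
  exact ⟨c0Subgroup G', rfl, (inferInstance : MetricSpace (C0 G')), fun _ _ => rfl,
    inferInstanceAs (PolishSpace (C0 G')), inferInstanceAs (IsTopologicalGroup (C0 G'))⟩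

/-- Let `Gₙ` be Polish groups with compatible invariant metrics `dₙ`.  Then
`c₀(Gₙ,dₙ) = {g ∈ ∏ₙ Gₙ : dₙ(g(n),e) → 0}`, with the supremum metric
`d_s(g,h) = supₙ dₙ(g(n),h(n))`, is a Polish group. -/
theorem stmt5 (G' : ℕ → Type*) [∀ n, Group (G' n)] [∀ n, MetricSpace (G' n)]
    [∀ n, IsTopologicalGroup (G' n)] [∀ n, PolishSpace (G' n)]
    (hinv : ∀ (n : ℕ) (g x y : G' n),
      dist (g * x) (g * y) = dist x y ∧ dist (x * g) (y * g) = dist x y) :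
    ∃ S : Subgroup (∀ n, G' n),
      (S : Set (∀ n, G' n)) =
        {g : ∀ n, G' n | Tendsto (fun n => dist (g n) (1 : G' n)) atTop (𝓝 0)} ∧
      ∃ m : MetricSpace S,
        (∀ g h : S,
          m.toDist.dist g h = ⨆ n, dist ((g : ∀ k, G' k) n) ((h : ∀ k, G' k) n)) ∧
        @PolishSpace S m.toUniformSpace.toTopologicalSpace ∧
        @IsTopologicalGroup S m.toUniformSpace.toTopologicalSpace _ :=
  stmt5_general G' hinv
end

section
/- Let G be an abelian quasi-torsion Polish group with compatible invariant metric d, and let Hₙ (n ∈ ℕ) be closed subgroups of G such that: (1) diam(Hₙ) → 0, (2) each Hₙ is a pro-πₙ group for some set of primes πₙ, and (3) πₙ ∩ πₙ' = ∅ whenever n ≠ n'. Then the closure of the internal direct sum ⊕ₙ Hₙ in G is topologically isomorphic to the product ∏ₙ Hₙ, via the map sending (hₙ) to the convergent sum Σₙ hₙ. -/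
/-!
Every coordinate `G → Aₘ` of the embedding into a product of discrete groups has open kernel,
so, as `diam Hₙ → 0`, it kills `Hₙ` for all large `n`. Hence `Σ hₙ` converges (the embedding
has closed range) and each of its coordinates is a finite sum. The image of the compact
pro-`πₙ` group `Hₙ` in `Aₘ` is finite of `πₙ`-order, so the terms of such a finite sum have
pairwise coprime orders and the sum vanishes only if every term does: this is injectivity.
Compactness of `∏ Hₙ` makes the continuous injection a closed embedding, and its range, a
closed subgroup containing every `Hₙ`, is the closure of `⊕ Hₙ`.
-/

open Topology Filter DirectSum

/-- A representation of `G` as a quasi-countable group: a topological-group closed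
embedding of `G` into a countable product of countable discrete groups, with all
coordinate projections surjective. -/
structure QuasiRep (G : Type*) [AddCommGroup G] [TopologicalSpace G] where
  /-- the countable discrete coordinate groups -/
  A : ℕ → Type
  [addgrp : ∀ n, AddCommGroup (A n)]
  [cnt : ∀ n, Countable (A n)]
  [top : ∀ n, TopologicalSpace (A n)]
  [disc : ∀ n, DiscreteTopology (A n)]
  /-- the embedding of `G` into the product -/
  e : G →+ ∀ n, A n
  emb : IsClosedEmbedding e
  surj : ∀ n, Function.Surjective fun x => e x n

attribute [instance] QuasiRep.addgrp QuasiRep.cnt QuasiRep.top QuasiRep.disc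

/-- `G` is quasi-countable: a closed subgroup of a countable product of countable
discrete groups with surjective coordinate projections. -/
def QuasiCountable (G : Type*) [AddCommGroup G] [TopologicalSpace G] : Prop :=
  Nonempty (QuasiRep G)

/-- `G` is quasi-torsion: quasi-countable with torsion coordinate groups. -/
def QuasiTorsion (G : Type*) [AddCommGroup G] [TopologicalSpace G] : Prop :=
  ∃ r : QuasiRep G, ∀ n, AddMonoid.IsTorsion (r.A n)

/-- An abelian group is a dsc group (direct sum of finite cyclic groups). -/
def IsDSC (A : Type*) [AddCommGroup A] : Prop :=
  ∃ f : ℕ → ℕ, (∀ i, 0 < f i) ∧ Nonempty ((⨁ i, ZMod (f i)) ≃+ A)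

/-- An abelian group is divisible. -/
def IsDivisibleGroup (A : Type*) [AddCommGroup A] : Prop :=
  ∀ n : ℤ, n ≠ 0 → Function.Surjective fun a : A => n • a

/-- `G` is quasi-dsc: quasi-countable with dsc coordinate groups. -/
def QuasiDsc (G : Type*) [AddCommGroup G] [TopologicalSpace G] : Prop :=
  ∃ r : QuasiRep G, ∀ n, IsDSC (r.A n)

/-- `G` is quasi-divisible: quasi-countable with divisible coordinate groups. -/
def QuasiDivisible (G : Type*) [AddCommGroup G] [TopologicalSpace G] : Prop :=
  ∃ r : QuasiRep G, ∀ n, IsDivisibleGroup (r.A n)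

/-- `G` is quasi-p: quasi-countable with `p`-group coordinate groups. -/
def QuasiP (G : Type*) [AddCommGroup G] [TopologicalSpace G] (p : ℕ) : Prop :=
  ∃ r : QuasiRep G, ∀ n, ∀ a : r.A n, ∃ k : ℕ, (p ^ k : ℕ) • a = 0

/-- A compact subgroup `H` is pro-π: every finite continuous quotient of `H` has order
whose prime divisors lie in `π`. -/
def IsProPi {G : Type*} [AddCommGroup G] [TopologicalSpace G] (H : AddSubgroup G)
    (π : Set ℕ) : Prop :=
  IsCompact (H : Set G) ∧
    ∀ N : AddSubgroup G, IsOpen (N : Set G) →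
      ∀ p : ℕ, p.Prime → p ∣ Nat.card (↥H ⧸ N.addSubgroupOf H) → p ∈ π

open Metric in
theorem eventually_subset_of_tendsto_diam {α ι : Type*} [PseudoMetricSpace α] {l : Filter ι}
    {s : ι → Set α} {x : α} (hx : ∀ i, x ∈ s i) (hb : ∀ i, Bornology.IsBounded (s i))
    (h : Tendsto (fun i => diam (s i)) l (𝓝 0)) {U : Set α} (hU : U ∈ 𝓝 x) :
    ∀ᶠ i in l, s i ⊆ U := by
  obtain ⟨ε, hε, hball⟩ := Metric.mem_nhds_iff.mp hU
  filter_upwards [h.eventually (eventually_lt_nhds hε)] with i hi y hy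
  exact hball <| (dist_le_diam_of_mem (hb i) hy (hx i)).trans_lt hi

theorem Topology.IsClosedEmbedding.exists_hasSum_of_hasSum {ι G P : Type*} [AddCommMonoid G]
    [TopologicalSpace G] [AddCommMonoid P] [TopologicalSpace P] {φ : G →+ P}
    (hφ : IsClosedEmbedding φ) {x : ι → G} {y : P} (h : HasSum (φ ∘ x) y) :
    ∃ g, HasSum x g ∧ φ g = y := by
  obtain ⟨g, rfl⟩ : y ∈ Set.range φ :=
    hφ.isClosed_range.mem_of_tendsto h <| Eventually.of_forall fun s =>
      ⟨∑ i ∈ s, x i, map_sum φ x s⟩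
  exact ⟨g, (hφ.isInducing.hasSum_iff x g).mp h, rfl⟩

theorem eq_zero_of_sum_eq_zero_of_coprime_addOrderOf {ι A : Type*} [DecidableEq ι]
    [AddCommMonoid A] {s : Finset ι} {a : ι → A}
    (hcop : ∀ i ∈ s, ∀ j ∈ s, i ≠ j → Nat.Coprime (addOrderOf (a i)) (addOrderOf (a j)))
    (hsum : ∑ i ∈ s, a i = 0) : ∀ i ∈ s, a i = 0 := by
  intro i hi
  set N : ℕ := ∏ j ∈ s.erase i, addOrderOf (a j)
  have hN : N • a i = 0 := by
    have hkill : ∀ j ∈ s.erase i, N • a j = 0 := fun j hj =>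
      addOrderOf_dvd_iff_nsmul_eq_zero.mp (Finset.dvd_prod_of_mem _ hj)
    calc N • a i = N • a i + ∑ j ∈ s.erase i, N • a j := by
          rw [Finset.sum_eq_zero hkill, add_zero]
      _ = N • ∑ j ∈ s, a j := by
          rw [Finset.smul_sum, Finset.add_sum_erase s (fun j => N • a j) hi]
      _ = 0 := by rw [hsum, smul_zero]
  have hcopN : Nat.Coprime (addOrderOf (a i)) N :=
    Nat.Coprime.prod_right fun j hj =>
      hcop i hi j (Finset.mem_of_mem_erase hj) (Finset.ne_of_mem_erase hj).symm
  exact AddMonoid.addOrderOf_eq_one_iff.mp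
    (hcopN.eq_one_of_dvd (addOrderOf_dvd_iff_nsmul_eq_zero.mpr hN))

section ProPi

variable {G A : Type*} [AddCommGroup G] [TopologicalSpace G] [AddCommGroup A] [TopologicalSpace A]
  [DiscreteTopology A] {H K : AddSubgroup G} {π ρ : Set ℕ} {φ : G →+ A}

theorem IsProPi.mem_of_dvd_addOrderOf (hH : IsProPi H π) (hφ : Continuous φ) {g : G}
    (hg : g ∈ H) {p : ℕ} (hp : p.Prime) (hpg : p ∣ addOrderOf (φ g)) : p ∈ π := by
  set ψ := φ.domRestrict H
  have : Finite ψ.range := by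
    have hrange : (ψ.range : Set A) = φ '' H := by ext; simp [ψ]
    exact (hrange ▸ (hH.1.image hφ).finite_of_discrete).to_subtype
  have hdvd : addOrderOf (φ g) ∣ Nat.card (H ⧸ φ.ker.addSubgroupOf H) := by
    rw [← φ.ker_domRestrict H, Nat.card_congr (QuotientAddGroup.quotientKerEquivRange ψ).toEquiv]
    have hmem : φ g ∈ ψ.range := ⟨⟨g, hg⟩, rfl⟩
    rw [← AddSubgroup.addOrderOf_mk (φ g) hmem]
    exact addOrderOf_dvd_natCard _
  exact hH.2 φ.ker ((isOpen_discrete {0}).preimage hφ) p hp (hpg.trans hdvd)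

theorem IsProPi.coprime_addOrderOf (hH : IsProPi H π) (hK : IsProPi K ρ) (hπρ : Disjoint π ρ)
    (hφ : Continuous φ) {g h : G} (hg : g ∈ H) (hh : h ∈ K) :
    Nat.Coprime (addOrderOf (φ g)) (addOrderOf (φ h)) :=
  Nat.coprime_of_dvd fun _ hp hpg hph =>
    hπρ.ne_of_mem (hH.mem_of_dvd_addOrderOf hφ hg hp hpg)
      (hK.mem_of_dvd_addOrderOf hφ hh hp hph) rfl

end ProPi

namespace QuasiRep

variable {G : Type*} [AddCommGroup G] [TopologicalSpace G] (r : QuasiRep G)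

def coord (m : ℕ) : G →+ r.A m :=
  (Pi.evalAddMonoidHom r.A m).comp r.e

@[fun_prop]
theorem continuous_coord (m : ℕ) : Continuous (r.coord m) :=
  (continuous_apply m).comp r.emb.continuous

theorem isOpen_ker_coord (m : ℕ) : IsOpen ((r.coord m).ker : Set G) :=
  (isOpen_discrete {0}).preimage (r.continuous_coord m)

theorem ext_coord {g h : G} (hgh : ∀ m, r.coord m g = r.coord m h) : g = h :=
  r.emb.injective (funext hgh)

variable {N : ℕ → ℕ} {x : ℕ → G}

theorem exists_hasSum_of_coord_eq_zero (hx : ∀ m n, N m ≤ n → r.coord m (x n) = 0) :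
    ∃ g, HasSum x g ∧ ∀ m, r.coord m g = ∑ n ∈ Finset.range (N m), r.coord m (x n) := by
  have hsum : HasSum (r.e ∘ x) fun m => ∑ n ∈ Finset.range (N m), r.coord m (x n) :=
    Pi.hasSum.mpr fun m => hasSum_sum_of_ne_finset_zero fun n hn =>
      hx m n (not_lt.mp (mt Finset.mem_range.mpr hn))
  obtain ⟨g, hg, hge⟩ := r.emb.exists_hasSum_of_hasSum hsum
  exact ⟨g, hg, congrFun hge⟩

theorem hasSum_tsum_of_coord_eq_zero (hx : ∀ m n, N m ≤ n → r.coord m (x n) = 0) :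
    HasSum x (∑' n, x n) :=
  (r.exists_hasSum_of_coord_eq_zero hx).elim fun _ h => h.1.summable.hasSum

variable [T2Space G]

theorem coord_tsum_of_coord_eq_zero (hx : ∀ m n, N m ≤ n → r.coord m (x n) = 0) (m : ℕ) :
    r.coord m (∑' n, x n) = ∑ n ∈ Finset.range (N m), r.coord m (x n) := by
  obtain ⟨g, hg, hgc⟩ := r.exists_hasSum_of_coord_eq_zero hx
  rw [hg.tsum_eq, hgc]

variable {H : ℕ → AddSubgroup G}

theorem coord_tsum_coe (hN : ∀ m n, N m ≤ n → ∀ g ∈ H n, r.coord m g = 0) (y : ∀ n, H n)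
    (m : ℕ) : r.coord m (∑' n, (y n : G)) = ∑ n ∈ Finset.range (N m), r.coord m (y n) :=
  r.coord_tsum_of_coord_eq_zero (fun m n hn => hN m n hn _ (y n).2) m

variable (hN : ∀ m n, N m ≤ n → ∀ g ∈ H n, r.coord m g = 0)

@[simps]
noncomputable def tsumAddHom : (∀ n, H n) →+ G where
  toFun y := ∑' n, (y n : G)
  map_zero' := by simp
  map_add' y z := r.ext_coord fun m => by
    rw [map_add, r.coord_tsum_coe hN, r.coord_tsum_coe hN, r.coord_tsum_coe hN,
      ← Finset.sum_add_distrib]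
    simp only [Pi.add_apply, AddSubgroup.coe_add, map_add]

theorem continuous_tsumAddHom : Continuous (r.tsumAddHom hN) := by
  refine r.emb.isInducing.continuous_iff.mpr (continuous_pi fun m => ?_)
  change Continuous fun y => r.coord m (r.tsumAddHom hN y)
  simp only [tsumAddHom_apply, r.coord_tsum_coe hN]
  fun_prop

theorem injective_tsumAddHom (hcop : ∀ m i j, i ≠ j → ∀ g ∈ H i, ∀ h ∈ H j,
      Nat.Coprime (addOrderOf (r.coord m g)) (addOrderOf (r.coord m h))) :
    Function.Injective (r.tsumAddHom hN) := by
  refine (injective_iff_map_eq_zero _).mpr fun y hy =>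
    funext fun n => Subtype.ext <| r.ext_coord fun m => ?_
  have hsum : ∑ k ∈ Finset.range (N m), r.coord m (y k) = 0 := by
    rw [← r.coord_tsum_coe hN, ← tsumAddHom_apply r hN, hy, map_zero]
  rw [Pi.zero_apply, ZeroMemClass.coe_zero, map_zero]
  by_cases hn : n < N m
  · exact eq_zero_of_sum_eq_zero_of_coprime_addOrderOf
      (fun i _ j _ hij => hcop m i j hij _ (y i).2 _ (y j).2) hsum n (Finset.mem_range.mpr hn)
  · exact hN m n (not_lt.mp hn) _ (y n).2

variable [∀ n, CompactSpace (H n)]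

theorem range_tsumAddHom :
    Set.range (r.tsumAddHom hN) = closure ((⨆ n, H n : AddSubgroup G) : Set G) := by
  refine subset_antisymm ?_
    (closure_minimal ?_ (isCompact_range (r.continuous_tsumAddHom hN)).isClosed)
  · rintro _ ⟨y, rfl⟩
    exact mem_closure_of_tendsto (r.hasSum_tsum_of_coord_eq_zero fun m n hn => hN m n hn _ (y n).2)
      (Eventually.of_forall fun s => AddSubgroup.sum_mem _ fun n _ => le_iSup H n (y n).2)
  · show ((⨆ n, H n : AddSubgroup G) : Set G) ⊆ (r.tsumAddHom hN).range
    refine SetLike.coe_subset_coe.mpr (iSup_le fun n g hg => ⟨Pi.single n ⟨g, hg⟩, ?_⟩)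
    classical
    rw [tsumAddHom_apply, tsum_eq_single n fun k hk => by simp [hk], Pi.single_eq_same]

end QuasiRep

theorem stmt6_general {G : Type*} [AddCommGroup G] [MetricSpace G]
    (hqt : QuasiTorsion G)
    (H : ℕ → AddSubgroup G)
    (hdiam : Tendsto (fun n => Metric.diam (H n : Set G)) atTop (𝓝 0))
    (π : ℕ → Set ℕ) (hpro : ∀ n, IsProPi (H n) (π n))
    (hdisj : ∀ n n', n ≠ n' → π n ∩ π n' = ∅) :
    (∀ x y : (∀ n, H n),
        (∑' n, ((x + y) n : G)) = (∑' n, (x n : G)) + ∑' n, (y n : G)) ∧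
    IsClosedEmbedding (fun x : (∀ n, H n) => ∑' n, (x n : G)) ∧
    Set.range (fun x : (∀ n, H n) => ∑' n, (x n : G)) =
      closure ((⨆ n, H n : AddSubgroup G) : Set G) := by
  obtain ⟨r, -⟩ := hqt
  have : ∀ n, CompactSpace (H n) := fun n => isCompact_iff_compactSpace.mp (hpro n).1
  have hvanish : ∀ m, ∃ N, ∀ n, N ≤ n → ∀ g ∈ H n, r.coord m g = 0 := fun m =>
    eventually_atTop.mp <| eventually_subset_of_tendsto_diam (fun n => (H n).zero_mem)
      (fun n => (hpro n).1.isBounded) hdiam ((r.isOpen_ker_coord m).mem_nhds (zero_mem _))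
  choose N hN using hvanish
  have hcop : ∀ m i j, i ≠ j → ∀ g ∈ H i, ∀ h ∈ H j,
      Nat.Coprime (addOrderOf (r.coord m g)) (addOrderOf (r.coord m h)) :=
    fun m i j hij _ hg _ hh => (hpro i).coprime_addOrderOf (hpro j)
      (Set.disjoint_iff_inter_eq_empty.mpr (hdisj i j hij)) (r.continuous_coord m) hg hh
  exact ⟨(r.tsumAddHom hN).map_add,
    (r.continuous_tsumAddHom hN).isClosedEmbedding (r.injective_tsumAddHom hN hcop),
    r.range_tsumAddHom hN⟩

/-- In an abelian quasi-torsion Polish group with a compatible invariant metric, if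
`Hₙ` are closed subgroups with `diam Hₙ → 0`, each `Hₙ` pro-πₙ with pairwise disjoint
sets of primes `πₙ`, then the closure of `⊕ₙ Hₙ` is topologically isomorphic to
`∏ₙ Hₙ` via `(hₙ) ↦ Σₙ hₙ`. -/
theorem stmt6 {G : Type*} [AddCommGroup G] [MetricSpace G] [IsTopologicalAddGroup G]
    [PolishSpace G]
    (hd : ∀ g x y : G, dist (g + x) (g + y) = dist x y)
    (hqt : QuasiTorsion G)
    (H : ℕ → AddSubgroup G) (hcl : ∀ n, IsClosed (H n : Set G))
    (hdiam : Tendsto (fun n => Metric.diam (H n : Set G)) atTop (𝓝 0))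
    (π : ℕ → Set ℕ) (hpro : ∀ n, IsProPi (H n) (π n))
    (hdisj : ∀ n n', n ≠ n' → π n ∩ π n' = ∅) :
    (∀ x y : (∀ n, H n),
        (∑' n, ((x + y) n : G)) = (∑' n, (x n : G)) + ∑' n, (y n : G)) ∧
    IsClosedEmbedding (fun x : (∀ n, H n) => ∑' n, (x n : G)) ∧
    Set.range (fun x : (∀ n, H n) => ∑' n, (x n : G)) =
      closure ((⨆ n, H n : AddSubgroup G) : Set G) :=
  stmt6_general hqt H hdiam π hpro hdisj
end

section
/- Let G be an abelian quasi-countable Polish group such that every neighborhood of 0 contains an element generating an infinite discrete subgroup. If G is not locally compact, then there exist infinite discrete groups Lₙ (n ∈ ℕ) such that ∏ₙ Lₙ embeds as a closed subgroup of G. -/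
open Topology Filter DirectSum

/-!
For a representation `e : G → ∏ Aᵢ`, the open subgroups `V m` of elements whose first `m`
coordinates vanish form a decreasing basis at `0`, and a discrete subgroup meets some `V m`
trivially. So one can choose `g_k ∈ V (N k)` generating infinite discrete subgroups `L k` with
`L k ∩ V (N (k+1)) = 0`. Null sequences of `G` are summable (coordinatewise the sums are finite,
and `G` is closed in the product), so `x ↦ ∑ x_k` maps `∏ L k` into `G`. This map pulls `V (N K)`
back exactly to the elements vanishing below `K`, hence is an embedding, and a diagonal argument
shows that its range is closed.
-/

section HeadKer

variable {X : ℕ → Type*} [∀ k, AddGroup (X k)]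

def headKer (K : ℕ) : AddSubgroup (∀ k, X k) :=
  AddSubgroup.pi (Set.Iio K) fun _ => ⊥

lemma mem_headKer {K : ℕ} {x : ∀ k, X k} : x ∈ headKer K ↔ ∀ k < K, x k = 0 := by
  simp [headKer, AddSubgroup.mem_pi]

lemma hasAntitoneBasis_nhds_zero_headKer [∀ k, TopologicalSpace (X k)]
    [∀ k, DiscreteTopology (X k)] :
    (𝓝 (0 : ∀ k, X k)).HasAntitoneBasis fun K => (headKer (X := X) K : Set (∀ k, X k)) := by
  refine ⟨⟨fun t => ⟨fun ht => ?_, fun ⟨K, _, hK⟩ => mem_of_superset ?_ hK⟩⟩, ?_⟩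
  · rw [nhds_pi, Filter.mem_pi] at ht
    obtain ⟨I, hI, s, hs, hsub⟩ := ht
    obtain ⟨K, hK⟩ := hI.bddAbove
    refine ⟨K + 1, trivial, fun x hx => hsub fun k hk => ?_⟩
    rw [mem_headKer.1 hx k (Nat.lt_succ_of_le (hK hk))]
    exact mem_of_mem_nhds (hs k)
  · rw [headKer, AddSubgroup.coe_pi]
    exact set_pi_mem_nhds (Set.finite_Iio K) fun k _ => by simp
  · exact fun K K' h x hx => mem_headKer.2 fun k hk => mem_headKer.1 hx k (hk.trans_le h)

end HeadKer

section DiscreteSubgroup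

variable {G : Type*} [AddGroup G] [TopologicalSpace G]

lemma exists_inf_eq_bot_of_discreteTopology {V : ℕ → AddSubgroup G}
    (hV : (𝓝 (0 : G)).HasBasis (fun _ => True) fun m => (V m : Set G)) (H : AddSubgroup G)
    [DiscreteTopology H] : ∃ m, H ⊓ V m = ⊥ := by
  have hbasis := hV.comap ((↑) : H → G)
  rw [← nhds_subtype_eq_comap (h := H.zero_mem)] at hbasis
  obtain ⟨m, -, hm⟩ := hbasis.mem_iff.1 (isOpen_discrete {(0 : H)} |>.mem_nhds rfl)
  refine ⟨m, (AddSubgroup.eq_bot_iff_forall _).2 fun x ⟨hxH, hxV⟩ => ?_⟩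
  exact congrArg Subtype.val (hm (show (⟨x, hxH⟩ : H) ∈ _ from hxV))

lemma discreteTopology_of_inf_eq_bot [IsTopologicalAddGroup G] {H U : AddSubgroup G}
    (hU : (U : Set G) ∈ 𝓝 0) (hHU : H ⊓ U = ⊥) : DiscreteTopology H := by
  refine discreteTopology_of_isOpen_singleton_zero ?_
  convert (U.isOpen_of_mem_nhds hU).preimage continuous_subtype_val
  ext x
  have := (AddSubgroup.eq_bot_iff_forall _).1 hHU x
  simp only [Set.mem_singleton_iff, Set.mem_preimage, SetLike.mem_coe]
  exact ⟨fun h => h ▸ U.zero_mem, fun hx => Subtype.ext (this ⟨x.2, hx⟩)⟩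

end DiscreteSubgroup

section SumOfSubgroups

variable {G : Type*} [AddCommGroup G] [TopologicalSpace G] [IsTopologicalAddGroup G] [T2Space G]
  {V L : ℕ → AddSubgroup G}

noncomputable def tsumHom (hL : ∀ x : ∀ k, L k, Summable fun k => (x k : G)) :
    (∀ k, L k) →+ G where
  toFun x := ∑' k, (x k : G)
  map_zero' := by simp
  map_add' x y := by simpa using (hL x).tsum_add (hL y)

lemma tsumHom_mem_of_mem_headKer (hV : (𝓝 (0 : G)).HasAntitoneBasis fun m => (V m : Set G))
    (hLV : ∀ k, L k ≤ V k) (hL : ∀ x : ∀ k, L k, Summable fun k => (x k : G)) {K : ℕ}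
    {x : ∀ k, L k} (hx : x ∈ headKer K) : tsumHom hL x ∈ V K := by
  refine tsum_mem ((V K).isClosed_of_isOpen ((V K).isOpen_of_mem_nhds (hV.mem K))) fun k => ?_
  rcases lt_or_ge k K with hk | hk
  · simp [mem_headKer.1 hx k hk]
  · exact hV.antitone hk (hLV k (x k).2)

lemma mem_headKer_of_tsumHom_mem (hV : (𝓝 (0 : G)).HasAntitoneBasis fun m => (V m : Set G))
    (hLV : ∀ k, L k ≤ V k) (hsep : ∀ k, L k ⊓ V (k + 1) = ⊥)
    (hL : ∀ x : ∀ k, L k, Summable fun k => (x k : G)) :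
    ∀ {K : ℕ} {x : ∀ k, L k}, tsumHom hL x ∈ V K → x ∈ headKer K
  | 0, _, _ => mem_headKer.2 fun k hk => absurd hk k.not_lt_zero
  | K + 1, x, hx => by
    have hxK : x ∈ headKer K :=
      mem_headKer_of_tsumHom_mem hV hLV hsep hL (hV.antitone K.le_succ hx)
    have htail : x - Pi.single K (x K) ∈ headKer (K + 1) := mem_headKer.2 fun k hk => by
      rcases Nat.lt_succ_iff_lt_or_eq.1 hk with hk | rfl
      · simp [mem_headKer.1 hxK k hk, Pi.single_eq_of_ne hk.ne]
      · simp
    have hsingle : tsumHom hL (Pi.single K (x K)) = x K :=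
      (tsum_eq_single K fun k hk => by simp [Pi.single_eq_of_ne hk]).trans (by simp)
    have hxKV : (x K : G) ∈ V (K + 1) := by
      have := sub_mem hx (tsumHom_mem_of_mem_headKer hV hLV hL htail)
      rwa [← map_sub, sub_sub_cancel, hsingle] at this
    have hxK0 : x K = 0 := Subtype.ext <| (AddSubgroup.eq_bot_iff_forall _).1 (hsep K) _
      ⟨(x K).2, hxKV⟩
    exact mem_headKer.2 fun k hk =>
      (Nat.lt_succ_iff_lt_or_eq.1 hk).elim (mem_headKer.1 hxK k) fun h => h ▸ hxK0


lemma comap_tsumHom (hV : (𝓝 (0 : G)).HasAntitoneBasis fun m => (V m : Set G))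
    (hLV : ∀ k, L k ≤ V k) (hsep : ∀ k, L k ⊓ V (k + 1) = ⊥)
    (hL : ∀ x : ∀ k, L k, Summable fun k => (x k : G)) (K : ℕ) :
    (V K).comap (tsumHom hL) = headKer K :=
  le_antisymm (fun _ => mem_headKer_of_tsumHom_mem hV hLV hsep hL)
    fun _ => tsumHom_mem_of_mem_headKer hV hLV hL

lemma isInducing_tsumHom (hV : (𝓝 (0 : G)).HasAntitoneBasis fun m => (V m : Set G))
    (hLV : ∀ k, L k ≤ V k) (hsep : ∀ k, L k ⊓ V (k + 1) = ⊥)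
    (hL : ∀ x : ∀ k, L k, Summable fun k => (x k : G)) : IsInducing (tsumHom hL) := by
  have : ∀ k, DiscreteTopology (L k) := fun k =>
    discreteTopology_of_inf_eq_bot (hV.mem _) (hsep k)
  have hcomap := (hV.comap (tsumHom hL)).1
  simp only [← AddSubgroup.coe_comap, comap_tsumHom hV hLV hsep hL] at hcomap
  exact IsTopologicalAddGroup.isInducing_iff_nhds_zero.2
    (hasAntitoneBasis_nhds_zero_headKer.1.eq_of_same_basis hcomap)

lemma isClosed_range_tsumHom (hV : (𝓝 (0 : G)).HasAntitoneBasis fun m => (V m : Set G))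
    (hLV : ∀ k, L k ≤ V k) (hsep : ∀ k, L k ⊓ V (k + 1) = ⊥)
    (hL : ∀ x : ∀ k, L k, Summable fun k => (x k : G)) : IsClosed (Set.range (tsumHom hL)) := by
  set S := tsumHom hL
  refine isClosed_of_closure_subset fun z hz => ?_
  have happrox : ∀ K, ∃ x, S x - z ∈ V K := fun K => by
    have := (continuous_sub_right z).tendsto' z 0 (sub_self z) (hV.mem K)
    obtain ⟨_, hw, x, rfl⟩ := mem_closure_iff_nhds.1 hz _ this
    exact ⟨x, hw⟩
  choose c hc using happrox
  -- the approximants `c K` stabilise coordinatewise; their diagonal is a preimage of `z`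
  have hagree : ∀ K K', c K - c K' ∈ headKer (min K K') := fun K K' => by
    refine mem_headKer_of_tsumHom_mem hV hLV hsep hL ?_
    rw [map_sub, ← sub_sub_sub_cancel_right _ _ z]
    exact sub_mem (hV.antitone (min_le_left _ _) (hc K)) (hV.antitone (min_le_right _ _) (hc K'))
  set x : ∀ k, L k := fun k => c (k + 1) k
  have hx : ∀ K, x - c K ∈ headKer K := fun K => mem_headKer.2 fun k hk => by
    simpa [x] using mem_headKer.1 (hagree (k + 1) K) k (lt_min k.lt_succ_self hk)
  have hxz : ∀ K, S x - z ∈ V K := fun K => by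
    have := add_mem (tsumHom_mem_of_mem_headKer hV hLV hL (hx K)) (hc K)
    rwa [map_sub, sub_add_sub_cancel] at this
  refine ⟨x, eq_of_sub_eq_zero (pure_le_nhds_iff.1 fun U hU => ?_)⟩
  obtain ⟨K, -, hK⟩ := hV.1.mem_iff.1 hU
  exact hK (hxz K)

theorem isClosedEmbedding_tsumHom (hV : (𝓝 (0 : G)).HasAntitoneBasis fun m => (V m : Set G))
    (hLV : ∀ k, L k ≤ V k) (hsep : ∀ k, L k ⊓ V (k + 1) = ⊥)
    (hL : ∀ x : ∀ k, L k, Summable fun k => (x k : G)) : IsClosedEmbedding (tsumHom hL) :=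
  ⟨(isInducing_tsumHom hV hLV hsep hL).isEmbedding, isClosed_range_tsumHom hV hLV hsep hL⟩

end SumOfSubgroups

lemma summable_of_tendsto_zero_pi {ι : Type*} {A : ι → Type*} [∀ i, AddCommGroup (A i)]
    [∀ i, TopologicalSpace (A i)] [∀ i, DiscreteTopology (A i)] {y : ℕ → ∀ i, A i}
    (hy : Tendsto y atTop (𝓝 0)) : Summable y := by
  refine Pi.summable.2 fun i => ?_
  have hyi := tendsto_pi_nhds.1 hy i
  rw [nhds_discrete, tendsto_pure, eventually_atTop] at hyi
  obtain ⟨K, hK⟩ := hyi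
  exact summable_of_ne_finset_zero (s := Finset.range K) fun k hk => hK k (by simpa using hk)

lemma Topology.IsClosedEmbedding.summable_of_summable_comp {G H ι : Type*} [AddCommMonoid G]
    [TopologicalSpace G] [AddCommMonoid H] [TopologicalSpace H] {e : G →+ H}
    (he : IsClosedEmbedding e) {f : ι → G} (hf : Summable (e ∘ f)) : Summable f := by
  obtain ⟨a, ha⟩ : ∑' k, e (f k) ∈ Set.range e :=
    he.isClosed_range.mem_of_tendsto hf.hasSum <|
      .of_forall fun s => ⟨∑ k ∈ s, f k, map_sum e f s⟩
  exact ⟨a, (he.isInducing.hasSum_iff f a).1 (ha ▸ hf.hasSum)⟩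

namespace QuasiRep

variable {G : Type*} [AddCommGroup G] [TopologicalSpace G]

def basicNhd (r : QuasiRep G) (m : ℕ) : AddSubgroup G := (headKer m).comap r.e

lemma hasAntitoneBasis_nhds_zero (r : QuasiRep G) :
    (𝓝 (0 : G)).HasAntitoneBasis fun m => (r.basicNhd m : Set G) := by
  rw [r.emb.isInducing.nhds_eq_comap, map_zero]
  exact hasAntitoneBasis_nhds_zero_headKer.comap r.e

lemma summable_of_tendsto_zero (r : QuasiRep G) {x : ℕ → G} (hx : Tendsto x atTop (𝓝 0)) :
    Summable x :=
  r.emb.summable_of_summable_comp <| summable_of_tendsto_zero_pi <| by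
    simpa using (r.emb.continuous.tendsto 0).comp hx

end QuasiRep

theorem stmt9_general {G : Type*} [AddCommGroup G] [TopologicalSpace G] [IsTopologicalAddGroup G]
    (hqc : QuasiCountable G)
    (hgen : ∀ U ∈ 𝓝 (0 : G), ∃ g ∈ U,
      Infinite (AddSubgroup.zmultiples g) ∧ DiscreteTopology (AddSubgroup.zmultiples g)) :
    ∃ L : ℕ → AddSubgroup G,
      (∀ n, Infinite (L n)) ∧ (∀ n, DiscreteTopology (L n)) ∧
      ∃ f : (∀ n, L n) → G,
        (∀ x y, f (x + y) = f x + f y) ∧ IsClosedEmbedding f := by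
  obtain ⟨r⟩ := hqc
  have : T2Space G := r.emb.isEmbedding.t2Space
  have hV := r.hasAntitoneBasis_nhds_zero
  choose g hgV hinf hdisc using fun m => hgen _ (hV.mem m)
  choose M hM using fun m =>
    have := hdisc m; exists_inf_eq_bot_of_discreteTopology hV.1 (AddSubgroup.zmultiples (g m))
  -- `N (k + 1) ≥ M (N k)` makes `L k` meet `r.basicNhd (N (k + 1))` trivially
  let N : ℕ → ℕ := fun k => Nat.rec 0 (fun _ n => max (n + 1) (M n)) k
  have hN : StrictMono N := strictMono_nat_of_lt_succ fun k => Nat.lt_of_succ_le (le_max_left _ _)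
  let L : ℕ → AddSubgroup G := fun k => AddSubgroup.zmultiples (g (N k))
  have hLV : ∀ k, L k ≤ r.basicNhd (N k) := fun k =>
    AddSubgroup.zmultiples_le_of_mem (hgV (N k))
  have hsep : ∀ k, L k ⊓ r.basicNhd (N (k + 1)) = ⊥ := fun k =>
    eq_bot_mono (inf_le_inf_left _ (hV.antitone (le_max_right _ _))) (hM (N k))
  have hL : ∀ x : ∀ k, L k, Summable fun k => (x k : G) := fun x =>
    r.summable_of_tendsto_zero ((hV.comp_strictMono hN).tendsto fun k => hLV k (x k).2)
  exact ⟨L, fun k => hinf _, fun k => hdisc _, tsumHom hL, map_add _,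
    isClosedEmbedding_tsumHom (hV.comp_strictMono hN) hLV hsep hL⟩

/-- If an abelian quasi-countable Polish group `G` is not locally compact and every
neighborhood of `0` contains an element generating an infinite discrete subgroup, then
there are infinite discrete groups `Lₙ` whose product embeds as a closed subgroup
of `G`. -/
theorem stmt9 {G : Type*} [AddCommGroup G] [TopologicalSpace G] [IsTopologicalAddGroup G]
    [PolishSpace G] (hqc : QuasiCountable G)
    (hgen : ∀ U ∈ 𝓝 (0 : G), ∃ g ∈ U,
      Infinite (AddSubgroup.zmultiples g) ∧ DiscreteTopology (AddSubgroup.zmultiples g))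
    (hnlc : ¬ LocallyCompactSpace G) :
    ∃ L : ℕ → AddSubgroup G,
      (∀ n, Infinite (L n)) ∧ (∀ n, DiscreteTopology (L n)) ∧
      ∃ f : (∀ n, L n) → G,
        (∀ x y, f (x + y) = f x + f y) ∧ IsClosedEmbedding f :=
  stmt9_general hqc hgen
end

section
/- Let G be an abelian quasi-p Polish group and let g, g' ∈ G. If the closure of ⟨g⟩ intersects the (abstract) cyclic subgroup ⟨g'⟩ trivially, then the closure of ⟨g⟩ intersects the closure of ⟨g'⟩ trivially. -/
open Topology Filter DirectSum

/-!
Every coordinate of `g'` has `p`-power order, so `m ↦ m • g'` extends to a continuous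
homomorphism `F : ℤ_[p] → G`; by compactness of `ℤ_[p]`, the closure of `⟨g'⟩` is the range of `F`.
Let `x = F α` lie in the closure `H` of `⟨g⟩`, with `α = u pᵛ` for a unit `u`. Multiplication by
`u⁻¹ ∈ ℤ_[p]` is a limit of multiplications by integers, so `pᵛ • g' = F (u⁻¹ α)` lies in the
closed subgroup `H`, and also in `⟨g'⟩`; hence it is `0`, and so is `x = F (u pᵛ)`.
-/

namespace PadicInt

variable {p : ℕ} [Fact p.Prime]

theorem continuous_toZModPow (n : ℕ) : Continuous (toZModPow (p := p) n) := by
  refine continuous_of_continuousAt_zero (toZModPow n) ?_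
  rw [ContinuousAt, map_zero, nhds_discrete (ZMod (p ^ n)), tendsto_pure]
  have hp : (0 : ℝ) < p := by exact_mod_cast (Fact.out : p.Prime).pos
  filter_upwards [Metric.closedBall_mem_nhds (0 : ℤ_[p]) (zpow_pos hp (-n : ℤ))] with x hx
  rw [← RingHom.mem_ker, ker_toZModPow, ← norm_le_pow_iff_mem_span_pow]
  simpa using hx

theorem exists_continuous_addMonoidHom_of_pow_smul_eq_zero {A : Type*} [AddCommGroup A]
    [TopologicalSpace A] [DiscreteTopology A] {a : A} {k : ℕ} (ha : (p ^ k : ℕ) • a = 0) :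
    ∃ F : ℤ_[p] →+ A, Continuous F ∧ F 1 = a := by
  let φ : ZMod (p ^ k) →+ A :=
    ZMod.lift (p ^ k) ⟨zmultiplesHom A a, by rw [zmultiplesHom_apply, natCast_zsmul, ha]⟩
  refine ⟨φ.comp (toZModPow (p := p) k).toAddMonoidHom,
    (continuous_of_discreteTopology (f := φ)).comp (continuous_toZModPow k), ?_⟩
  show φ (toZModPow k 1) = a
  rw [map_one, ← Int.cast_one, ZMod.lift_coe, zmultiplesHom_apply, one_zsmul]

theorem exists_continuous_addMonoidHom_pi {ι : Type*} {A : ι → Type*}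
    [∀ i, AddCommGroup (A i)] [∀ i, TopologicalSpace (A i)] [∀ i, DiscreteTopology (A i)]
    {a : ∀ i, A i} (ha : ∀ i, ∃ k : ℕ, (p ^ k : ℕ) • a i = 0) :
    ∃ F : ℤ_[p] →+ ∀ i, A i, Continuous F ∧ F 1 = a := by
  choose k hk using ha
  choose F hF hF1 using fun i => exists_continuous_addMonoidHom_of_pow_smul_eq_zero (hk i)
  exact ⟨AddMonoidHom.pi F, continuous_pi hF, funext hF1⟩

section AddMonoidHom

variable {M : Type*} [AddCommGroup M]

theorem map_intCast_eq_zsmul (F : ℤ_[p] →+ M) (m : ℤ) : F m = m • F 1 := by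
  rw [← map_zsmul, zsmul_one]

variable [TopologicalSpace M] {F : ℤ_[p] →+ M}

theorem map_mul_mem_closure_zmultiples (hF : Continuous F) (β α : ℤ_[p]) :
    F (β * α) ∈ closure (AddSubgroup.zmultiples (F α) : Set M) := by
  refine map_mem_closure (f := fun β => F (β * α)) (hF.comp (continuous_mul_const α))
    (denseRange_intCast β) ?_
  rintro _ ⟨m, rfl⟩
  exact ⟨m, by simp [← zsmul_eq_mul]⟩

theorem range_eq_closure_zmultiples [T2Space M] (hF : Continuous F) :
    Set.range F = closure (AddSubgroup.zmultiples (F 1) : Set M) := by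
  refine subset_antisymm ?_ (closure_minimal ?_ (isCompact_range hF).isClosed)
  · rintro _ ⟨β, rfl⟩
    simpa using map_mul_mem_closure_zmultiples hF β 1
  · rintro _ ⟨m, rfl⟩
    exact ⟨m, map_intCast_eq_zsmul F m⟩

theorem map_eq_zero_of_disjoint_zmultiples [T1Space M] (hF : Continuous F) {H : AddSubgroup M}
    (hH : IsClosed (H : Set M)) (hdisj : Disjoint H (AddSubgroup.zmultiples (F 1)))
    {α : ℤ_[p]} (hα : F α ∈ H) : F α = 0 := by
  by_cases h0 : α = 0
  · simp [h0]
  set v := α.valuation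
  set u := unitCoeff h0
  have hα_eq : α = u * (p : ℤ_[p]) ^ v := unitCoeff_spec h0
  have hpow_mem : F ((p : ℤ_[p]) ^ v) ∈ AddSubgroup.zmultiples (F 1) :=
    ⟨(p : ℤ) ^ v, by simp [← map_intCast_eq_zsmul]⟩
  have hpow_mem_H : F ((p : ℤ_[p]) ^ v) ∈ H := by
    have hu : (p : ℤ_[p]) ^ v = ↑u⁻¹ * α := by
      rw [hα_eq, ← mul_assoc, ← Units.val_mul, inv_mul_cancel, Units.val_one, one_mul]
    rw [hu]
    exact closure_minimal (AddSubgroup.zmultiples_le.2 hα) hH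
      (map_mul_mem_closure_zmultiples hF _ α)
  have hpow_zero := AddSubgroup.disjoint_def.1 hdisj hpow_mem_H hpow_mem
  have := map_mul_mem_closure_zmultiples hF u ((p : ℤ_[p]) ^ v)
  rwa [← hα_eq, hpow_zero, AddSubgroup.zmultiples_zero_eq_bot, AddSubgroup.coe_bot,
    closure_singleton, Set.mem_singleton_iff] at this

end AddMonoidHom

end PadicInt

theorem Topology.IsClosedEmbedding.exists_padicInt_lift {p : ℕ} [Fact p.Prime]
    {G P : Type*} [AddCommGroup G] [TopologicalSpace G] [AddCommGroup P] [TopologicalSpace P]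
    [T2Space P] {e : G →+ P} (he : IsClosedEmbedding e) {g : G} {F₀ : ℤ_[p] →+ P}
    (hF₀ : Continuous F₀) (h1 : F₀ 1 = e g) : ∃ F : ℤ_[p] →+ G, Continuous F ∧ F 1 = g := by
  have hsub : ∀ α, F₀ α ∈ e.range := by
    intro α
    have hle : AddSubgroup.zmultiples (F₀ 1) ≤ e.range := AddSubgroup.zmultiples_le.2 ⟨g, h1.symm⟩
    have hα := closure_mono (SetLike.coe_subset_coe.2 hle)
      ((PadicInt.range_eq_closure_zmultiples hF₀).subset ⟨α, rfl⟩)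
    rwa [AddMonoidHom.coe_range, he.isClosed_range.closure_eq] at hα
  let F : ℤ_[p] →+ G :=
    (AddMonoidHom.ofInjective he.injective).symm.toAddMonoidHom.comp (F₀.codRestrict _ hsub)
  have heF : ∀ α, e (F α) = F₀ α := fun α => AddMonoidHom.apply_ofInjective_symm he.injective _
  refine ⟨F, he.continuous_iff.2 ?_, he.injective ?_⟩
  · simpa only [Function.comp_def, heF] using hF₀
  · rw [heF, h1]

theorem stmt16_general {G : Type*} [AddCommGroup G] [TopologicalSpace G] [IsTopologicalAddGroup G]
    (p : ℕ) (hp : p.Prime) (hqp : QuasiP G p) (g g' : G)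
    (h : closure ((AddSubgroup.zmultiples g : AddSubgroup G) : Set G) ∩
        ((AddSubgroup.zmultiples g' : AddSubgroup G) : Set G) = {0}) :
    closure ((AddSubgroup.zmultiples g : AddSubgroup G) : Set G) ∩
      closure ((AddSubgroup.zmultiples g' : AddSubgroup G) : Set G) = {0} := by
  have : Fact p.Prime := ⟨hp⟩
  obtain ⟨r, hr⟩ := hqp
  have : T2Space G := r.emb.isEmbedding.t2Space
  obtain ⟨F₀, hF₀, h1⟩ := PadicInt.exists_continuous_addMonoidHom_pi fun n => hr n (r.e g' n)
  obtain ⟨F, hF, rfl⟩ := r.emb.exists_padicInt_lift hF₀ h1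
  have hdisj : Disjoint (AddSubgroup.zmultiples g).topologicalClosure
      (AddSubgroup.zmultiples (F 1)) :=
    AddSubgroup.disjoint_def.2 fun hx hy => h.subset ⟨hx, hy⟩
  refine Set.eq_singleton_iff_unique_mem.2
    ⟨⟨subset_closure (zero_mem _), subset_closure (zero_mem _)⟩, ?_⟩
  rintro x ⟨hxg, hxg'⟩
  rw [← PadicInt.range_eq_closure_zmultiples hF] at hxg'
  obtain ⟨α, rfl⟩ := hxg'
  exact PadicInt.map_eq_zero_of_disjoint_zmultiples hF (AddSubgroup.isClosed_topologicalClosure _) hdisj hxg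

/-- In an abelian quasi-p Polish group, if the closure of `⟨g⟩` meets `⟨g'⟩` trivially,
then it meets the closure of `⟨g'⟩` trivially. -/
theorem stmt16 {G : Type*} [AddCommGroup G] [TopologicalSpace G] [IsTopologicalAddGroup G]
    [PolishSpace G] (p : ℕ) (hp : p.Prime) (hqp : QuasiP G p) (g g' : G)
    (h : closure ((AddSubgroup.zmultiples g : AddSubgroup G) : Set G) ∩
        ((AddSubgroup.zmultiples g' : AddSubgroup G) : Set G) = {0}) :
    closure ((AddSubgroup.zmultiples g : AddSubgroup G) : Set G) ∩
      closure ((AddSubgroup.zmultiples g' : AddSubgroup G) : Set G) = {0} :=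
  stmt16_general p hp hqp g g' h
end

section
/- Let G be an abelian quasi-p Polish group. Then either (1) there exists a closed pro-cyclic subgroup H ≤ G such that G/H contains a clopen subgroup of bounded exponent, or (2) the set D = {(g,g') ∈ G² : cl⟨g⟩ ∩ cl⟨g'⟩ = {0}} is comeager in G². -/
open Topology Filter DirectSum

/-!
Write `cl⟨g⟩` for `closure (zmultiples g)`. A quasi-p group is nonarchimedean and satisfies
`p ^ k • x → 0` for every `x`. In such a group, if `h ≠ 0` lies in `cl⟨g⟩`, take `e` maximal with
`h ∈ cl⟨p ^ e • g⟩` (it exists since `p ^ j • g → 0`); then `p ^ e • g` is a nonzero element of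
`cl⟨h⟩`. So the complement of `D` is covered by the sets `{p ^ e • g ≠ 0} ∩ {p ^ e • g ∈ cl⟨g'⟩}`,
each the intersection of an open and a closed set. If `D` is not comeager, one of them has
nonempty interior, which yields `h₀ ≠ 0` with `h₀ ∈ cl⟨g'⟩` for all `g'` near some `g₁`.
Applying the first fact to `g₁ + w` and to `g₁`, every `w` near `0` has `p ^ t • w ∈ H := cl⟨h₀⟩`
for some `t`; by Baire one of the closed subgroups `{w | p ^ t • w ∈ H}` is open, and its image
in `G ⧸ H` is a clopen subgroup of exponent `p ^ t`. Finally `H` is compact because its image in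
`∏ A n` lies in the product of the finite groups `⟨r.e h₀ n⟩`.
-/

open Set
open AddSubgroup (zmultiples mem_zmultiples mem_zmultiples_iff zmultiples_le)

theorem NonarchimedeanAddGroup.of_isInducing {G H : Type*} [AddGroup G] [TopologicalSpace G]
    [IsTopologicalAddGroup G] [AddGroup H] [TopologicalSpace H] [NonarchimedeanAddGroup H]
    (f : G →+ H) (hf : IsInducing f) : NonarchimedeanAddGroup G where
  is_nonarchimedean U hU := by
    rw [hf.nhds_eq_comap, map_zero, Filter.mem_comap] at hU
    obtain ⟨T, hT, hTU⟩ := hU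
    obtain ⟨V, hV⟩ := NonarchimedeanAddGroup.is_nonarchimedean T hT
    exact ⟨V.comap f hf.continuous, fun x hx => hTU (hV hx)⟩

instance Pi.nonarchimedeanAddGroup_of_discreteTopology {ι : Type*} {A : ι → Type*}
    [∀ i, AddGroup (A i)] [∀ i, TopologicalSpace (A i)] [∀ i, DiscreteTopology (A i)] :
    NonarchimedeanAddGroup (∀ i, A i) where
  is_nonarchimedean U hU := by
    rw [nhds_pi, Filter.mem_pi] at hU
    obtain ⟨I, hI, t, ht, hIt⟩ := hU
    refine ⟨⟨AddSubgroup.pi I fun _ => ⊥, isOpen_set_pi hI fun _ _ => isOpen_discrete _⟩,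
      fun x hx => hIt fun i hi => ?_⟩
    rw [show x i = 0 from hx i hi]
    exact mem_of_mem_nhds (ht i)

theorem exists_isOpen_of_iUnion_mem_nhds_zero {G ι : Type*} [AddGroup G] [TopologicalSpace G]
    [IsTopologicalAddGroup G] [BaireSpace G] [Countable ι] {S : ι → AddSubgroup G}
    (hS : ∀ i, IsClosed (S i : Set G)) (hcov : ⋃ i, (S i : Set G) ∈ 𝓝 0) :
    ∃ i, IsOpen (S i : Set G) := by
  obtain ⟨i, hi⟩ : ∃ i, ¬ IsMeagre (S i : Set G) := by
    by_contra! h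
    exact not_isMeagre_of_isOpen isOpen_interior ⟨0, mem_interior_iff_mem_nhds.mpr hcov⟩
      ((isMeagre_iUnion h).mono interior_subset)
  obtain ⟨x, hx⟩ : (interior (S i : Set G)).Nonempty := by
    rw [nonempty_iff_ne_empty, ne_eq, ← (hS i).isNowhereDense_iff]
    exact fun h => hi h.isMeagre
  exact ⟨i, (S i).isOpen_of_mem_nhds (mem_interior_iff_mem_nhds.mp hx)⟩

theorem nonempty_interior_inter_of_not_isMeagre {X : Type*} [TopologicalSpace X]
    {U F : Set X} (hU : IsOpen U) (hF : IsClosed F) (h : ¬ IsMeagre (U ∩ F)) :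
    (interior (U ∩ F)).Nonempty := by
  obtain ⟨x, hx⟩ : (interior (closure (U ∩ F))).Nonempty :=
    nonempty_iff_ne_empty.mpr fun h' => h (IsNowhereDense.isMeagre h')
  have hxU : x ∈ closure U := closure_mono inter_subset_left (interior_subset hx)
  obtain ⟨y, hyW, hyU⟩ := _root_.mem_closure_iff.mp hxU _ isOpen_interior hx
  refine ⟨y, mem_interior.mpr ⟨_ ∩ U, ?_, isOpen_interior.inter hU, hyW, hyU⟩⟩
  rintro z ⟨hzW, hzU⟩
  exact ⟨hzU, closure_minimal inter_subset_right hF (interior_subset hzW)⟩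

theorem exists_isClopen_nsmul_eq_zero_of_isOpen {G : Type*} [AddCommGroup G]
    [TopologicalSpace G] [IsTopologicalAddGroup G] (H : AddSubgroup G) (m : ℕ)
    (hS : IsOpen (H.comap (nsmulAddMonoidHom m) : Set G)) :
    ∃ U : AddSubgroup (G ⧸ H), IsClopen (U : Set (G ⧸ H)) ∧ ∀ u ∈ U, m • u = 0 := by
  set U := (H.comap (nsmulAddMonoidHom m)).map (QuotientAddGroup.mk' H)
  have hU : IsOpen (U : Set (G ⧸ H)) := by
    rw [AddSubgroup.coe_map, QuotientAddGroup.coe_mk']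
    exact QuotientAddGroup.isOpenMap_coe _ hS
  refine ⟨U, ⟨U.isClosed_of_isOpen hU, hU⟩, ?_⟩
  rintro _ ⟨w, hw, rfl⟩
  rw [← map_nsmul, QuotientAddGroup.mk'_apply, QuotientAddGroup.eq_zero_iff]
  exact hw

section Nonarchimedean

variable {G : Type*} [AddCommGroup G] [TopologicalSpace G] [NonarchimedeanAddGroup G]

theorem mem_closure_addSubgroup_iff {S : AddSubgroup G} {y : G} :
    y ∈ closure (S : Set G) ↔ ∀ V : OpenAddSubgroup G, ∃ s ∈ S, y - s ∈ V := by
  have hsub : Tendsto (fun z => y - z) (𝓝 y) (𝓝 0) := by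
    simpa using (continuous_sub_left y).tendsto y
  have hsub' : Tendsto (fun z => y - z) (𝓝 0) (𝓝 y) := by
    simpa using (continuous_sub_left y).tendsto 0
  rw [mem_closure_iff_nhds]
  constructor
  · intro h V
    obtain ⟨s, hs, hsS⟩ := h _ (hsub V.mem_nhds_zero)
    exact ⟨s, hsS, hs⟩
  · intro h t ht
    obtain ⟨V, hV⟩ := NonarchimedeanAddGroup.is_nonarchimedean _ (hsub' ht)
    obtain ⟨s, hs, hys⟩ := h V
    exact ⟨s, by simpa using hV hys, hs⟩

theorem mem_closure_zmultiples_iff {x y : G} :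
    y ∈ closure (zmultiples x : Set G) ↔ ∀ V : OpenAddSubgroup G, ∃ k : ℤ, y - k • x ∈ V := by
  simp only [mem_closure_addSubgroup_iff, mem_zmultiples_iff, exists_exists_eq_and]

theorem isClosed_setOf_mem_closure_zmultiples :
    IsClosed {x : G × G | x.1 ∈ closure (zmultiples x.2 : Set G)} := by
  rw [← isOpen_compl_iff, isOpen_iff_mem_nhds]
  intro x hx
  obtain ⟨V, hV⟩ : ∃ V : OpenAddSubgroup G, ∀ k : ℤ, x.1 - k • x.2 ∉ V := by
    simpa [mem_closure_zmultiples_iff] using hx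
  have hnear : ∀ᶠ y in 𝓝 x, y.1 - x.1 ∈ V ∧ y.2 - x.2 ∈ V := by
    have hc (y₀ : G) : Tendsto (fun z => z - y₀) (𝓝 y₀) (𝓝 0) := by
      simpa using (continuous_sub_right y₀).tendsto y₀
    exact (((hc x.1).comp (continuous_fst.tendsto x)).eventually V.mem_nhds_zero).and
      (((hc x.2).comp (continuous_snd.tendsto x)).eventually V.mem_nhds_zero)
  filter_upwards [hnear] with y ⟨h₁, h₂⟩ hy
  obtain ⟨k, hk⟩ := mem_closure_zmultiples_iff.mp hy V
  refine hV k ?_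
  have : x.1 - k • x.2 = (y.1 - k • y.2) - (y.1 - x.1) + k • (y.2 - x.2) := by module
  rw [this]
  exact add_mem (sub_mem hk h₁) (zsmul_mem h₂ k)

variable {p : ℕ}

/- Approximating `h` by `k • x` modulo a small open subgroup `V` forces `p ∤ k`, so `k` is
invertible modulo the `p`-power order of `x` in `G ⧸ V`. -/
theorem mem_closure_zmultiples_of_notMem_closure_zmultiples_smul (hp : p.Prime)
    (htp : ∀ x : G, Tendsto (fun k : ℕ => p ^ k • x) atTop (𝓝 0)) {x h : G}
    (hx : h ∈ closure (zmultiples x : Set G))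
    (hpx : h ∉ closure (zmultiples (p • x) : Set G)) :
    x ∈ closure (zmultiples h : Set G) := by
  obtain ⟨V₀, hV₀⟩ : ∃ V₀ : OpenAddSubgroup G, ∀ k : ℤ, h - k • (p • x) ∉ V₀ := by
    simpa [mem_closure_zmultiples_iff] using hpx
  rw [mem_closure_zmultiples_iff]
  intro V
  obtain ⟨k, hk⟩ := mem_closure_zmultiples_iff.mp hx (V ⊓ V₀)
  obtain ⟨L, hL⟩ := ((htp x).eventually (V ⊓ V₀).mem_nhds_zero).exists
  have hpk : ¬ (p : ℤ) ∣ k := by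
    rintro ⟨k', rfl⟩
    apply hV₀ k'
    convert (OpenAddSubgroup.mem_inf.mp hk).2 using 2
    rw [mul_comm, mul_zsmul, natCast_zsmul]
  obtain ⟨a, b, hab⟩ : IsCoprime ((p : ℤ) ^ L) k :=
    ((Nat.prime_iff_prime_int.mp hp).coprime_iff_not_dvd.mpr hpk).pow_left
  refine ⟨b, ?_⟩
  have hcomb : x - b • h = a • (p ^ L • x) - b • (h - k • x) := by
    linear_combination (norm := module) hab.symm • x
  rw [hcomb]
  exact sub_mem (zsmul_mem (OpenAddSubgroup.mem_inf.mp hL).1 a)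
    (zsmul_mem (OpenAddSubgroup.mem_inf.mp hk).1 b)

theorem exists_pow_smul_mem_closure_zmultiples [T1Space G] (hp : p.Prime)
    (htp : ∀ x : G, Tendsto (fun k : ℕ => p ^ k • x) atTop (𝓝 0)) {g h : G} (hh : h ≠ 0)
    (hg : h ∈ closure (zmultiples g : Set G)) :
    ∃ e : ℕ, p ^ e • g ≠ 0 ∧ p ^ e • g ∈ closure (zmultiples h : Set G) := by
  classical
  obtain ⟨V, hV⟩ :=
    NonarchimedeanAddGroup.is_nonarchimedean _ (isOpen_compl_singleton.mem_nhds hh.symm)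
  obtain ⟨k, hk⟩ := ((htp g).eventually V.mem_nhds_zero).exists
  have hout : ∃ j, h ∉ closure (zmultiples (p ^ j • g) : Set G) :=
    ⟨k, fun hmem => hV (closure_minimal (zmultiples_le.mpr hk) V.isClosed hmem) rfl⟩
  obtain ⟨e, he⟩ := Nat.exists_eq_succ_of_ne_zero (n := Nat.find hout) fun h0 =>
    Nat.find_spec hout (by rwa [h0, pow_zero, one_smul])
  have hin : h ∈ closure (zmultiples (p ^ e • g) : Set G) :=
    not_not.mp (Nat.find_min hout (by omega))
  have hnot : h ∉ closure (zmultiples (p • p ^ e • g) : Set G) := by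
    rw [smul_smul, ← pow_succ', ← Nat.succ_eq_add_one, ← he]
    exact Nat.find_spec hout
  refine ⟨e, fun h0 => hh ?_,
    mem_closure_zmultiples_of_notMem_closure_zmultiples_smul hp htp hin hnot⟩
  rwa [h0, AddSubgroup.zmultiples_zero_eq_bot, AddSubgroup.coe_bot, closure_singleton] at hin

theorem compl_setOf_closure_zmultiples_inter_eq_zero_subset [T1Space G] (hp : p.Prime)
    (htp : ∀ x : G, Tendsto (fun k : ℕ => p ^ k • x) atTop (𝓝 0)) :
    {x : G × G | closure (zmultiples x.1 : Set G) ∩ closure (zmultiples x.2 : Set G) = {0}}ᶜ ⊆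
      ⋃ e : ℕ, {x : G × G | p ^ e • x.1 ≠ 0} ∩
        {x | p ^ e • x.1 ∈ closure (zmultiples x.2 : Set G)} := by
  intro x hx
  obtain ⟨h, ⟨h₁, h₂⟩, hh⟩ : ∃ h ∈ closure (zmultiples x.1 : Set G) ∩
      closure (zmultiples x.2 : Set G), h ≠ 0 := by
    by_contra! hc
    exact hx (eq_singleton_iff_unique_mem.mpr
      ⟨⟨subset_closure (zero_mem _), subset_closure (zero_mem _)⟩, hc⟩)
  obtain ⟨e, hne, hmem⟩ := exists_pow_smul_mem_closure_zmultiples hp htp hh h₁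
  have hsub : closure (zmultiples h : Set G) ⊆ closure (zmultiples x.2 : Set G) :=
    closure_minimal (zmultiples_le.mpr h₂ : zmultiples h ≤ (zmultiples x.2).topologicalClosure)
      isClosed_closure
  exact mem_iUnion.mpr ⟨e, hne, hsub hmem⟩

theorem exists_eventually_mem_closure_zmultiples_of_notMem_residual [T1Space G]
    (hp : p.Prime) (htp : ∀ x : G, Tendsto (fun k : ℕ => p ^ k • x) atTop (𝓝 0))
    (hD : {x : G × G | closure (zmultiples x.1 : Set G) ∩ closure (zmultiples x.2 : Set G) = {0}}
      ∉ residual (G × G)) :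
    ∃ h₀ g₁ : G, h₀ ≠ 0 ∧ ∀ᶠ g in 𝓝 g₁, h₀ ∈ closure (zmultiples g : Set G) := by
  obtain ⟨e, he⟩ : ∃ e : ℕ, ¬ IsMeagre ({x : G × G | p ^ e • x.1 ≠ 0} ∩
      {x | p ^ e • x.1 ∈ closure (zmultiples x.2 : Set G)}) := by
    by_contra! h
    exact hD (by simpa [IsMeagre] using
      (isMeagre_iUnion h).mono (compl_setOf_closure_zmultiples_inter_eq_zero_subset hp htp))
  have hopen : IsOpen {x : G × G | p ^ e • x.1 ≠ 0} :=
    isOpen_compl_singleton.preimage ((continuous_const_smul _).comp continuous_fst)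
  have hclosed : IsClosed {x : G × G | p ^ e • x.1 ∈ closure (zmultiples x.2 : Set G)} :=
    isClosed_setOf_mem_closure_zmultiples.preimage
      (((continuous_const_smul _).comp continuous_fst).prodMk continuous_snd)
  obtain ⟨y, hy⟩ := nonempty_interior_inter_of_not_isMeagre hopen hclosed he
  rw [mem_interior_iff_mem_nhds, nhds_prod_eq, Filter.mem_prod_iff] at hy
  obtain ⟨P, hP, Q, hQ, hPQ⟩ := hy
  exact ⟨p ^ e • y.1, y.2, (hPQ ⟨mem_of_mem_nhds hP, mem_of_mem_nhds hQ⟩).1,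
    Filter.mem_of_superset hQ fun g hg => (hPQ (mk_mem_prod (mem_of_mem_nhds hP) hg)).2⟩

theorem iUnion_comap_nsmul_closure_zmultiples_mem_nhds_zero [T1Space G] (hp : p.Prime)
    (htp : ∀ x : G, Tendsto (fun k : ℕ => p ^ k • x) atTop (𝓝 0)) {h₀ g₁ : G} (hh₀ : h₀ ≠ 0)
    (hnear : ∀ᶠ g in 𝓝 g₁, h₀ ∈ closure (zmultiples g : Set G)) :
    ⋃ t : ℕ, ((zmultiples h₀).topologicalClosure.comap (nsmulAddMonoidHom (p ^ t)) : Set G) ∈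
      𝓝 0 := by
  obtain ⟨β, -, hβ⟩ := exists_pow_smul_mem_closure_zmultiples hp htp hh₀ hnear.self_of_nhds
  have hshift : Tendsto (fun w => g₁ + w) (𝓝 0) (𝓝 g₁) := by
    simpa using (continuous_const_add g₁).tendsto 0
  filter_upwards [hshift.eventually hnear] with w hw
  obtain ⟨α, -, hα⟩ := exists_pow_smul_mem_closure_zmultiples hp htp hh₀ hw
  have hcomb : p ^ (α + β) • w = p ^ β • p ^ α • (g₁ + w) - p ^ α • p ^ β • g₁ := by module
  refine mem_iUnion.mpr ⟨α + β, ?_⟩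
  change p ^ (α + β) • w ∈ (zmultiples h₀).topologicalClosure
  rw [hcomb]
  exact sub_mem (nsmul_mem hα _) (nsmul_mem hβ _)

end Nonarchimedean

namespace QuasiRep

variable {G : Type*} [AddCommGroup G] [TopologicalSpace G]

theorem nonarchimedeanAddGroup [IsTopologicalAddGroup G] (r : QuasiRep G) :
    NonarchimedeanAddGroup G :=
  .of_isInducing r.e r.emb.isInducing

theorem totallyDisconnectedSpace (r : QuasiRep G) : TotallyDisconnectedSpace G :=
  r.emb.isEmbedding.isTotallyDisconnected_range.mp
    (isTotallyDisconnected_of_totallyDisconnectedSpace _)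

theorem tendsto_pow_smul_nhds_zero (r : QuasiRep G) {p : ℕ}
    (hr : ∀ n, ∀ a : r.A n, ∃ k : ℕ, p ^ k • a = 0) (x : G) :
    Tendsto (fun k : ℕ => p ^ k • x) atTop (𝓝 0) := by
  rw [r.emb.isInducing.tendsto_nhds_iff, map_zero, tendsto_pi_nhds]
  intro n
  obtain ⟨k₀, hk₀⟩ := hr n (r.e x n)
  rw [nhds_discrete, tendsto_pure, eventually_atTop]
  refine ⟨k₀, fun k hk => ?_⟩
  simp only [Function.comp_apply, map_nsmul, Pi.smul_apply, Pi.zero_apply]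
  exact addOrderOf_dvd_iff_nsmul_eq_zero.mp
    ((addOrderOf_dvd_of_nsmul_eq_zero hk₀).trans (pow_dvd_pow p hk))

theorem isCompact_closure_zmultiples (r : QuasiRep G) (htors : ∀ n, IsAddTorsion (r.A n))
    (h : G) : IsCompact (closure (zmultiples h : Set G)) := by
  set T := univ.pi fun n => (zmultiples (r.e h n) : Set (r.A n))
  have hT : IsClosed T := isClosed_set_pi fun _ _ => isClosed_discrete _
  have himage : r.e '' (zmultiples h : Set G) ⊆ T := by
    rintro _ ⟨_, ⟨k, rfl⟩, rfl⟩ n -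
    simp only [map_zsmul, Pi.smul_apply, SetLike.mem_coe]
    exact zsmul_mem (mem_zmultiples _) k
  have hTc : IsCompact T :=
    isCompact_univ_pi fun n => (htors n (r.e h n)).finite_zmultiples.isCompact
  rw [r.emb.isEmbedding.isCompact_iff]
  exact hTc.of_isClosed_subset (r.emb.isClosedMap _ isClosed_closure)
    ((image_closure_subset_closure_image r.emb.continuous).trans (closure_minimal himage hT))

end QuasiRep

/-- For an abelian quasi-p Polish group `G`: either there is a closed pro-cyclic
subgroup `H ≤ G` such that `G/H` contains a clopen subgroup of bounded exponent, or
the set `D = {(g,g') : cl⟨g⟩ ∩ cl⟨g'⟩ = {0}}` is comeager in `G²`. -/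
theorem stmt17 {G : Type*} [AddCommGroup G] [TopologicalSpace G] [IsTopologicalAddGroup G]
    [PolishSpace G] (p : ℕ) (hp : p.Prime) (hqp : QuasiP G p) :
    (∃ H : AddSubgroup G, IsClosed (H : Set G) ∧ IsCompact (H : Set G) ∧
        TotallyDisconnectedSpace H ∧
        (∃ h ∈ H, closure ((AddSubgroup.zmultiples h : AddSubgroup G) : Set G) = H) ∧
        ∃ U : AddSubgroup (G ⧸ H), IsClopen (U : Set (G ⧸ H)) ∧
          ∃ m : ℕ, 0 < m ∧ ∀ u ∈ U, m • u = 0) ∨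
    {x : G × G |
        closure ((AddSubgroup.zmultiples x.1 : AddSubgroup G) : Set G) ∩
          closure ((AddSubgroup.zmultiples x.2 : AddSubgroup G) : Set G) = {0}} ∈
      residual (G × G) := by
  obtain ⟨r, hr⟩ := hqp
  have := r.nonarchimedeanAddGroup
  have := r.totallyDisconnectedSpace
  have htp := r.tendsto_pow_smul_nhds_zero hr
  refine or_iff_not_imp_right.mpr fun hD => ?_
  obtain ⟨h₀, g₁, hh₀, hnear⟩ :=
    exists_eventually_mem_closure_zmultiples_of_notMem_residual hp htp hD
  set H := (zmultiples h₀).topologicalClosure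
  have hH : IsClosed (H : Set G) := (zmultiples h₀).isClosed_topologicalClosure
  obtain ⟨t, ht⟩ := exists_isOpen_of_iUnion_mem_nhds_zero
    (fun t => hH.preimage (continuous_const_smul (p ^ t)))
    (iUnion_comap_nsmul_closure_zmultiples_mem_nhds_zero hp htp hh₀ hnear)
  obtain ⟨U, hU, hUt⟩ := exists_isClopen_nsmul_eq_zero_of_isOpen H _ ht
  have htors (n : ℕ) : IsAddTorsion (r.A n) := fun a =>
    have ⟨k, hk⟩ := hr n a
    isOfFinAddOrder_iff_nsmul_eq_zero.mpr ⟨p ^ k, pow_pos hp.pos k, hk⟩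
  exact ⟨H, hH, r.isCompact_closure_zmultiples htors h₀, inferInstance,
    ⟨h₀, (zmultiples h₀).le_topologicalClosure (mem_zmultiples h₀), rfl⟩,
    U, hU, p ^ t, pow_pos hp.pos t, hUt⟩
end
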